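/- arXiv:2312.07109 — 8 statements merged into one kernel-verified Lean document; each statement's English description precedes it below -/
import Mathlib

section
/- Let m, n be nonnegative integers and suppose there is a perfect k-coloring g of the Doob graph D(m,n) with quotient matrix S. Then for any nonnegative integers m' and n' there is a perfect k-coloring of D(m+m', n+n') with quotient matrix S + (6m' + 3n')·E. -/
open SimpleGraph

/-- The Shrikhande graph: Cayley graph on `ZMod 4 × ZMod 4` with connection set
`{(0,1),(0,3),(1,0),(3,0),(1,1),(3,3)}`. -/
def shrikhande : SimpleGraph (ZMod 4 × ZMod 4) :=
  SimpleGraph.fromRel (fun x y =>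
    x - y ∈ ({(0, 1), (0, 3), (1, 0), (3, 0), (1, 1), (3, 3)} : Set (ZMod 4 × ZMod 4)))

/-- Vertices of the Doob graph `D(m,n)`. -/
abbrev DoobVertex (m n : ℕ) := (Fin m → ZMod 4 × ZMod 4) × (Fin n → ZMod 4)

/-- The Doob graph `D(m,n)`: the Cartesian (box) product of `m` copies of the
Shrikhande graph and `n` copies of the complete graph `K₄`. Two vertices are
adjacent iff they differ in exactly one coordinate and are adjacent in the
corresponding factor. -/
def doobGraph (m n : ℕ) : SimpleGraph (DoobVertex m n) :=
  SimpleGraph.fromRel (fun x y =>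
    (∃ i, shrikhande.Adj (x.1 i) (y.1 i) ∧ (∀ j, j ≠ i → x.1 j = y.1 j) ∧ x.2 = y.2) ∨
    (∃ i, x.2 i ≠ y.2 i ∧ (∀ j, j ≠ i → x.2 j = y.2 j) ∧ x.1 = y.1))

/-- `f` is a perfect coloring of `G` with quotient matrix `S`: `f` is surjective and
every vertex of color `i` has exactly `S i j` neighbors of color `j`. -/
def IsPerfectColoring {V C : Type*} (G : SimpleGraph V) (f : V → C)
    (S : Matrix C C ℕ) : Prop :=
  Function.Surjective f ∧
    ∀ x c, {y | G.Adj x y ∧ f y = c}.ncard = S (f x) c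

/-! Color the new vertices by forgetting the new coordinates. Since
`D(m+1,n) ≅ D(m,n) □ Shrikhande` and `D(m,n+1) ≅ D(m,n) □ K₄`, it suffices that pulling a
perfect coloring of `G` back along the projection `G □ H → G`, for `H` regular of degree `d`,
gives a perfect coloring with quotient matrix `S + d • 1`: every vertex keeps its old neighbors
and gains `d` new ones, all of its own color. -/

section PerfectColoring

variable {V W V' C : Type*} {G : SimpleGraph V} {f : V → C} {S : Matrix C C ℕ}

theorem IsPerfectColoring.comp_iso {G' : SimpleGraph V'} {f' : V' → C}
    (hf' : IsPerfectColoring G' f' S) (e : G ≃g G') : IsPerfectColoring G (f' ∘ e) S := by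
  refine ⟨hf'.1.comp e.surjective, fun x c => ?_⟩
  have hpre : {y | G.Adj x y ∧ f' (e y) = c} = e ⁻¹' {y' | G'.Adj (e x) y' ∧ f' y' = c} := by
    ext y
    simp only [Set.mem_ofPred_eq, Set.mem_preimage, e.map_adj_iff]
  rw [Function.comp_apply, ← hf'.2 (e x) c, ← Set.ncard_preimage_of_injective_subset_range
    e.injective (by simp [e.surjective.range_eq]), ← hpre]
  rfl

theorem IsPerfectColoring.boxProd_fst [DecidableEq C] [Finite V] [Finite W] [Nonempty W]
    {H : SimpleGraph W} {d : ℕ} (hf : IsPerfectColoring G f S)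
    (hH : ∀ w, (H.neighborSet w).ncard = d) :
    IsPerfectColoring (G □ H) (f ∘ Prod.fst) (S + d • 1) := by
  refine ⟨hf.1.comp Prod.fst_surjective, fun x c => ?_⟩
  set B : Set V := if f x.1 = c then {x.1} else ∅
  have hsplit : {y | (G □ H).Adj x y ∧ (f ∘ Prod.fst) y = c} =
      {v | G.Adj x.1 v ∧ f v = c} ×ˢ {x.2} ∪ B ×ˢ H.neighborSet x.2 := by
    ext ⟨v, w⟩
    simp only [B, boxProd_adj, Function.comp_apply, Set.mem_ofPred_eq, Set.mem_union,
      Set.mem_prod, Set.mem_singleton_iff, mem_neighborSet]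
    split_ifs <;> grind
  have hdisj : Disjoint ({v | G.Adj x.1 v ∧ f v = c} ×ˢ {x.2}) (B ×ˢ H.neighborSet x.2) := by
    rw [Set.disjoint_left]
    rintro ⟨v, w⟩ ⟨-, rfl⟩ ⟨-, hw⟩
    exact H.irrefl hw
  rw [hsplit, Set.ncard_union_eq hdisj, Set.ncard_prod, Set.ncard_prod, hf.2, hH]
  simp only [B, Matrix.add_apply, Matrix.smul_apply, Matrix.one_apply, smul_eq_mul,
    Function.comp_apply]
  split_ifs <;> simp

end PerfectColoring

def SingleCoordRel {ι α : Type*} (R : α → α → Prop) (x y : ι → α) : Prop :=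
  ∃ i, R (x i) (y i) ∧ ∀ j, j ≠ i → x j = y j

namespace SingleCoordRel

variable {ι α : Type*} {R : α → α → Prop}

theorem symm (hR : ∀ a b, R a b → R b a) {x y : ι → α} (h : SingleCoordRel R x y) :
    SingleCoordRel R y x := by
  obtain ⟨i, hi, hj⟩ := h
  exact ⟨i, hR _ _ hi, fun j hji => (hj j hji).symm⟩

theorem ne (hR : ∀ a, ¬ R a a) {x y : ι → α} (h : SingleCoordRel R x y) : x ≠ y := by
  rintro rfl
  obtain ⟨i, hi, -⟩ := h
  exact hR _ hi

theorem iff_init {m : ℕ} {x y : Fin (m + 1) → α} :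
    SingleCoordRel R x y ↔
      SingleCoordRel R (Fin.init x) (Fin.init y) ∧ x (Fin.last m) = y (Fin.last m) ∨
        R (x (Fin.last m)) (y (Fin.last m)) ∧ Fin.init x = Fin.init y := by
  constructor
  · rintro ⟨i, hi, hj⟩
    induction i using Fin.lastCases with
    | last => exact Or.inr ⟨hi, funext fun j => hj _ (Fin.castSucc_ne_last j)⟩
    | cast i =>
      exact Or.inl ⟨⟨i, hi, fun j hji => hj _ (Fin.castSucc_injective _ |>.ne hji)⟩,
        hj _ (Fin.castSucc_ne_last i).symm⟩
  · rintro (⟨⟨i, hi, hj⟩, hlast⟩ | ⟨hi, hinit⟩)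
    · refine ⟨i.castSucc, hi, fun j hji => ?_⟩
      induction j using Fin.lastCases with
      | last => exact hlast
      | cast j => exact hj j (fun h => hji (h ▸ rfl))
    · refine ⟨Fin.last m, hi, fun j hj => ?_⟩
      obtain ⟨j, rfl⟩ := Fin.exists_castSucc_eq.mpr hj
      exact congrFun hinit j

end SingleCoordRel

theorem Fin.eq_iff_init_eq_and_last_eq {m : ℕ} {α : Type*} {x y : Fin (m + 1) → α} :
    x = y ↔ Fin.init x = Fin.init y ∧ x (Fin.last m) = y (Fin.last m) := by
  rw [← (Fin.snocEquiv fun _ => α).symm.injective.eq_iff]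
  simp [and_comm]

theorem doobGraph_adj {m n : ℕ} {x y : DoobVertex m n} :
    (doobGraph m n).Adj x y ↔
      SingleCoordRel shrikhande.Adj x.1 y.1 ∧ x.2 = y.2 ∨
        SingleCoordRel (· ≠ ·) x.2 y.2 ∧ x.1 = y.1 := by
  rw [doobGraph, fromRel_adj]
  simp only [← and_assoc, exists_and_right]
  constructor
  · rintro ⟨-, h | ⟨h, h2⟩ | ⟨h, h1⟩⟩
    · exact h
    · exact Or.inl ⟨SingleCoordRel.symm (fun _ _ => Adj.symm) h, h2.symm⟩
    · exact Or.inr ⟨SingleCoordRel.symm (fun _ _ => Ne.symm) h, h1.symm⟩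
  · refine fun h => ⟨?_, Or.inl h⟩
    rcases h with ⟨h, -⟩ | ⟨h, -⟩
    · exact fun hxy => SingleCoordRel.ne shrikhande.loopless.irrefl h (congrArg Prod.fst hxy)
    · exact fun hxy => SingleCoordRel.ne (fun a => (· rfl)) h (congrArg Prod.snd hxy)

abbrev shrikhandeConnection : Set (ZMod 4 × ZMod 4) :=
  {(0, 1), (0, 3), (1, 0), (3, 0), (1, 1), (3, 3)}

theorem shrikhande_adj_iff {a b : ZMod 4 × ZMod 4} :
    shrikhande.Adj a b ↔ b - a ∈ shrikhandeConnection := by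
  have hconn : ∀ u : ZMod 4 × ZMod 4,
      u ≠ 0 ∧ (-u ∈ shrikhandeConnection ∨ u ∈ shrikhandeConnection) ↔
        u ∈ shrikhandeConnection := by
    simp only [Set.mem_insert_iff, Set.mem_singleton_iff]
    decide
  rw [shrikhande, fromRel_adj]
  refine Iff.trans ?_ (hconn (b - a))
  rw [neg_sub, sub_ne_zero]
  exact and_congr ne_comm Iff.rfl

theorem shrikhande_neighborSet_ncard (a : ZMod 4 × ZMod 4) :
    (shrikhande.neighborSet a).ncard = 6 := by
  have himage : shrikhande.neighborSet a = (a + ·) '' shrikhandeConnection := by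
    ext b
    simp [shrikhande_adj_iff, neg_add_eq_sub]
  rw [himage, Set.ncard_image_of_injective _ (add_right_injective a),
    Set.ncard_eq_toFinset_card']
  rfl

theorem top_neighborSet_ncard {V : Type*} [Finite V] (a : V) :
    ((⊤ : SimpleGraph V).neighborSet a).ncard = Nat.card V - 1 := by
  rw [neighborSet_top, Set.ncard_compl, Set.ncard_singleton]

def doobGraphSuccShrikhandeIso (m n : ℕ) :
    doobGraph (m + 1) n ≃g doobGraph m n □ shrikhande where
  toFun x := ((Fin.init x.1, x.2), x.1 (Fin.last m))
  invFun p := (Fin.snoc p.1.1 p.2, p.1.2)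
  left_inv x := by simp
  right_inv p := by simp
  map_rel_iff' {x y} := by
    simp only [Equiv.coe_fn_mk, boxProd_adj, doobGraph_adj, SingleCoordRel.iff_init (x := x.1),
      Fin.eq_iff_init_eq_and_last_eq (x := x.1), Prod.ext_iff]
    tauto

def doobGraphSuccCompleteIso (m n : ℕ) :
    doobGraph m (n + 1) ≃g doobGraph m n □ (⊤ : SimpleGraph (ZMod 4)) where
  toFun x := ((x.1, Fin.init x.2), x.2 (Fin.last n))
  invFun p := (p.1.1, Fin.snoc p.1.2 p.2)
  left_inv x := by simp
  right_inv p := by simp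
  map_rel_iff' {x y} := by
    simp only [Equiv.coe_fn_mk, boxProd_adj, doobGraph_adj, top_adj,
      SingleCoordRel.iff_init (x := x.2), Fin.eq_iff_init_eq_and_last_eq (x := x.2), Prod.ext_iff]
    tauto

namespace IsPerfectColoring

variable {m n k : ℕ} {S : Matrix (Fin k) (Fin k) ℕ} {g : DoobVertex m n → Fin k}

theorem doobGraph_succ_left (hg : IsPerfectColoring (doobGraph m n) g S) :
    IsPerfectColoring (doobGraph (m + 1) n) (g ∘ Prod.fst ∘ doobGraphSuccShrikhandeIso m n)
      (S + 6 • 1) :=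
  (hg.boxProd_fst shrikhande_neighborSet_ncard).comp_iso _

theorem doobGraph_succ_right (hg : IsPerfectColoring (doobGraph m n) g S) :
    IsPerfectColoring (doobGraph m (n + 1)) (g ∘ Prod.fst ∘ doobGraphSuccCompleteIso m n)
      (S + 3 • 1) :=
  (hg.boxProd_fst fun a => by rw [top_neighborSet_ncard, Nat.card_zmod]).comp_iso _

theorem exists_doobGraph_add_left (hg : IsPerfectColoring (doobGraph m n) g S) (m' : ℕ) :
    ∃ f : DoobVertex (m + m') n → Fin k,
      IsPerfectColoring (doobGraph (m + m') n) f (S + (6 * m') • 1) := by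
  induction m' with
  | zero => exact ⟨g, by simpa using hg⟩
  | succ m' ih =>
    obtain ⟨f, hf⟩ := ih
    rw [mul_add_one, add_smul, ← add_assoc S]
    exact ⟨_, hf.doobGraph_succ_left⟩

theorem exists_doobGraph_add_right (hg : IsPerfectColoring (doobGraph m n) g S) (n' : ℕ) :
    ∃ f : DoobVertex m (n + n') → Fin k,
      IsPerfectColoring (doobGraph m (n + n')) f (S + (3 * n') • 1) := by
  induction n' with
  | zero => exact ⟨g, by simpa using hg⟩
  | succ n' ih =>
    obtain ⟨f, hf⟩ := ih
    rw [mul_add_one, add_smul, ← add_assoc S]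
    exact ⟨_, hf.doobGraph_succ_right⟩

end IsPerfectColoring

theorem stmt_0 (m n k : ℕ) (S : Matrix (Fin k) (Fin k) ℕ)
    (g : DoobVertex m n → Fin k)
    (hg : IsPerfectColoring (doobGraph m n) g S)
    (m' n' : ℕ) :
    ∃ f : DoobVertex (m + m') (n + n') → Fin k,
      IsPerfectColoring (doobGraph (m + m') (n + n')) f
        (S + (6 * m' + 3 * n') • (1 : Matrix (Fin k) (Fin k) ℕ)) := by
  obtain ⟨f, hf⟩ := hg.exists_doobGraph_add_left m'
  rw [add_smul, ← add_assoc]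
  exact hf.exists_doobGraph_add_right n'
end

section
/- If there is a perfect (b,1)-coloring of the Doob graph D(m,n), then b is divisible by 3; moreover, if n = 0 then b is divisible by 6. -/
open SimpleGraph

/-- A perfect `(b,c)`-coloring: a perfect 2-coloring in which every vertex of
color `0` has exactly `b` neighbors of color `1`, every vertex of color `1` has
exactly `c` neighbors of color `0` (and the numbers of same-color neighbors are
also constant on each color class). -/
def IsPerfectBCColoring {V : Type*} (G : SimpleGraph V) (f : V → Fin 2)
    (b c : ℕ) : Prop :=
  ∃ a d : ℕ,
    IsPerfectColoring G f (Matrix.of ![![a, b], ![c, d]])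

namespace DoobAux

/-- a divisibility lemma: if a finite set is closed under a map all of whose
orbits have size exactly `k`, then `k` divides its cardinality. -/
lemma dvd_card_of_orbits {α : Type*} [DecidableEq α] (k : ℕ) (hk : 0 < k) (σ : α → α)
    (hσ : ∀ y, σ^[k] y = y) (s : Finset α) (hclosed : ∀ y ∈ s, σ y ∈ s)
    (hfree : ∀ y ∈ s, ∀ j, 0 < j → j < k → σ^[j] y ≠ y) :
    k ∣ s.card := by
  have hinj : Function.Injective σ := by
    intro a b h
    have ha := hσ a
    have hb := hσ b
    obtain ⟨k', rfl⟩ : ∃ k', k = k' + 1 := ⟨k - 1, (Nat.succ_pred_eq_of_pos hk).symm⟩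
    rw [Function.iterate_succ_apply] at ha hb
    calc a = σ^[k'] (σ a) := ha.symm
      _ = σ^[k'] (σ b) := by rw [h]
      _ = b := hb
  induction s using Finset.strongInduction with
  | _ s ih =>
    rcases s.eq_empty_or_nonempty with rfl | ⟨y, hy⟩
    · simp
    · set O : Finset α := (Finset.range k).image (fun j => σ^[j] y) with hO
      have hiter : ∀ j, σ^[j] y ∈ s := by
        intro j
        induction j with
        | zero => simpa
        | succ j ihj => rw [Function.iterate_succ_apply']; exact hclosed _ ihj
      have hOsub : O ⊆ s := by
        intro z hz
        simp only [hO, Finset.mem_image, Finset.mem_range] at hz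
        obtain ⟨j, _, rfl⟩ := hz
        exact hiter j
      have hinj2 : ∀ i j, i ≤ j → j < k → σ^[i] y = σ^[j] y → i = j := by
        intro i j hij hjk h
        rw [show j = i + (j - i) by omega, Function.iterate_add_apply] at h
        have h2 := (hinj.iterate i) h
        by_contra hne
        exact hfree y hy (j - i) (by omega) (by omega) h2.symm
      have hcardO : O.card = k := by
        rw [hO, Finset.card_image_of_injOn, Finset.card_range]
        intro i hi j hj h
        simp only [Finset.mem_coe, Finset.mem_range] at hi hj
        rcases le_total i j with h'|h'
        · exact hinj2 i j h' hj h
        · exact (hinj2 j i h' hi h.symm).symm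
      have hOne : y ∈ O := by
        simp only [hO, Finset.mem_image, Finset.mem_range]
        exact ⟨0, hk, rfl⟩
      have hss : s \ O ⊂ s := Finset.sdiff_ssubset hOsub ⟨y, hOne⟩
      have hclosed' : ∀ z ∈ s \ O, σ z ∈ s \ O := by
        intro z hz
        rw [Finset.mem_sdiff] at hz ⊢
        refine ⟨hclosed _ hz.1, fun hmem => hz.2 ?_⟩
        simp only [hO, Finset.mem_image, Finset.mem_range] at hmem ⊢
        obtain ⟨j, hj, hjeq⟩ := hmem
        rcases Nat.eq_zero_or_pos j with rfl | hjpos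
        · refine ⟨k - 1, by omega, hinj ?_⟩
          have e : σ^[k-1+1] y = σ (σ^[k-1] y) := Function.iterate_succ_apply' σ (k-1) y
          rw [← e, show k - 1 + 1 = k by omega, hσ]
          simpa using hjeq
        · refine ⟨j - 1, by omega, hinj ?_⟩
          have e : σ^[j-1+1] y = σ (σ^[j-1] y) := Function.iterate_succ_apply' σ (j-1) y
          rw [← e, show j - 1 + 1 = j by omega]
          exact hjeq
      have hrec := ih (s \ O) hss hclosed' (fun z hz => hfree z (Finset.mem_sdiff.mp hz).1)
      have hcard : (s \ O).card = s.card - k := by rw [Finset.card_sdiff_of_subset hOsub, hcardO]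
      have hle : k ≤ s.card := hcardO ▸ Finset.card_le_card hOsub
      rw [hcard] at hrec
      have : s.card = (s.card - k) + k := by omega
      rw [this]
      exact Nat.dvd_add hrec dvd_rfl

/-- one-step rotation of the hexagonal local structure of the Shrikhande graph. -/
def rr (w : ZMod 4 × ZMod 4) : ZMod 4 × ZMod 4 := (w.2, 3 * w.1 + w.2)
/-- a 3-cycle on the nonzero elements of `ZMod 4`, fixing `0`. -/
def tt (t : ZMod 4) : ZMod 4 := if t = 0 then 0 else if t = 1 then 2 else if t = 2 then 3 else 1
/-- the connection set of the Shrikhande graph. -/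
def SS : Set (ZMod 4 × ZMod 4) := {(0, 1), (0, 3), (1, 0), (3, 0), (1, 1), (3, 3)}

lemma mem_SS_iff (w : ZMod 4 × ZMod 4) :
    w ∈ SS ↔ w = (0,1) ∨ w = (0,3) ∨ w = (1,0) ∨ w = (3,0) ∨ w = (1,1) ∨ w = (3,3) := by
  simp [SS]

lemma hSneg : ∀ s ∈ SS, -s ∈ SS := by
  intro s hs; rw [mem_SS_iff] at hs ⊢
  rcases hs with rfl|rfl|rfl|rfl|rfl|rfl <;> decide

lemma zeroSS : (0 : ZMod 4 × ZMod 4) ∉ SS := by rw [mem_SS_iff]; decide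

lemma hSr : ∀ s ∈ SS, rr s ∈ SS ∧ rr s - s ∈ SS ∧ rr s ≠ s ∧ rr (rr s) ≠ s ∧
    rr (rr (rr s)) ≠ s ∧ rr (rr (rr (rr s))) ≠ s ∧ rr (rr (rr (rr (rr s)))) ≠ s := by
  intro s hs
  rw [mem_SS_iff] at hs
  rcases hs with rfl|rfl|rfl|rfl|rfl|rfl <;>
    refine ⟨by rw [mem_SS_iff]; decide, by rw [mem_SS_iff]; decide,
      by decide, by decide, by decide, by decide, by decide⟩

lemma hr6 : ∀ w, rr (rr (rr (rr (rr (rr w))))) = w := by decide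
lemma hr0 : rr 0 = 0 := by decide
lemma htt3 : ∀ t : ZMod 4, tt (tt (tt t)) = t := by decide
lemma htt0 : tt 0 = 0 := by decide
lemma httne : ∀ t : ZMod 4, t ≠ 0 → tt t ≠ 0 ∧ tt t ≠ t ∧ tt (tt t) ≠ t := by decide

lemma shrik_adj_iff (u v : ZMod 4 × ZMod 4) : shrikhande.Adj u v ↔ u - v ∈ SS := by
  rw [shrikhande, fromRel_adj]
  constructor
  · rintro ⟨hne, h | h⟩
    · exact h
    · have := hSneg _ h; rwa [neg_sub] at this
  · intro h
    refine ⟨fun he => zeroSS ?_, Or.inl h⟩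
    rwa [he, sub_self] at h

lemma doob_adj_iff {m n : ℕ} (x y : DoobVertex m n) : (doobGraph m n).Adj x y ↔
    (∃ i, shrikhande.Adj (x.1 i) (y.1 i) ∧ (∀ j, j ≠ i → x.1 j = y.1 j) ∧ x.2 = y.2) ∨
    (∃ i, x.2 i ≠ y.2 i ∧ (∀ j, j ≠ i → x.2 j = y.2 j) ∧ x.1 = y.1) := by
  rw [doobGraph, fromRel_adj]
  constructor
  · rintro ⟨hne, h | h⟩
    · exact h
    · rcases h with ⟨i, h1, h2, h3⟩ | ⟨i, h1, h2, h3⟩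
      · exact Or.inl ⟨i, h1.symm, fun j hj => (h2 j hj).symm, h3.symm⟩
      · exact Or.inr ⟨i, h1.symm, fun j hj => (h2 j hj).symm, h3.symm⟩
  · intro h
    refine ⟨?_, Or.inl h⟩
    rcases h with ⟨i, h1, _, _⟩ | ⟨i, h1, _, _⟩
    · exact fun he => h1.ne (by rw [he])
    · exact fun he => h1 (by rw [he])

variable {m n : ℕ}

/-- neighbor of `x` in Shrikhande coordinate `i`, offset `s`. -/
def uA (x : DoobVertex m n) (i : Fin m) (s : ZMod 4 × ZMod 4) : DoobVertex m n :=
  (Function.update x.1 i (x.1 i + s), x.2)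
/-- neighbor of `x` in `K4` coordinate `i`, offset `t`. -/
def vB (x : DoobVertex m n) (i : Fin n) (t : ZMod 4) : DoobVertex m n :=
  (x.1, Function.update x.2 i (x.2 i + t))

lemma adj_uA_uA (x : DoobVertex m n) (i : Fin m) {s s' : ZMod 4 × ZMod 4}
    (h : s - s' ∈ SS) : (doobGraph m n).Adj (uA x i s) (uA x i s') := by
  rw [doob_adj_iff]
  refine Or.inl ⟨i, ?_, fun j hj => ?_, rfl⟩
  · rw [shrik_adj_iff]
    simp only [uA, Function.update_self]
    convert h using 1
    abel
  · simp [uA, Function.update_of_ne hj]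

lemma uA_zero (x : DoobVertex m n) (i : Fin m) : uA x i 0 = x := by
  simp [uA]

lemma adj_x_uA (x : DoobVertex m n) (i : Fin m) {s : ZMod 4 × ZMod 4}
    (h : s ∈ SS) : (doobGraph m n).Adj x (uA x i s) := by
  have := adj_uA_uA x i (s := 0) (s' := s) (by simpa using hSneg s h)
  rwa [uA_zero] at this

lemma adj_vB_vB (x : DoobVertex m n) (i : Fin n) {t t' : ZMod 4}
    (h : t ≠ t') : (doobGraph m n).Adj (vB x i t) (vB x i t') := by
  rw [doob_adj_iff]
  refine Or.inr ⟨i, ?_, fun j hj => ?_, rfl⟩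
  · simp only [vB, Function.update_self]
    exact fun he => h (by exact add_left_cancel he)
  · simp [vB, Function.update_of_ne hj]

lemma vB_zero (x : DoobVertex m n) (i : Fin n) : vB x i 0 = x := by
  simp [vB]

lemma adj_x_vB (x : DoobVertex m n) (i : Fin n) {t : ZMod 4}
    (h : t ≠ 0) : (doobGraph m n).Adj x (vB x i t) := by
  have := adj_vB_vB x i (t := 0) (t' := t) (Ne.symm h)
  rwa [vB_zero] at this

lemma uA_inj (x : DoobVertex m n) (i : Fin m) {s s' : ZMod 4 × ZMod 4}
    (h : uA x i s = uA x i s') : s = s' := by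
  have := congrFun (congrArg Prod.fst h) i
  simpa [uA] using this

lemma vB_inj (x : DoobVertex m n) (i : Fin n) {t t' : ZMod 4}
    (h : vB x i t = vB x i t') : t = t' := by
  have := congrFun (congrArg Prod.snd h) i
  simpa [vB] using this

/-- order-3 symmetry of the neighborhood of `x`. -/
def sig3 (x y : DoobVertex m n) : DoobVertex m n :=
  (fun i => x.1 i + rr (rr (y.1 i - x.1 i)), fun i => x.2 i + tt (y.2 i - x.2 i))
/-- order-6 symmetry of the neighborhood of `x` (used when `n = 0`). -/
def sig6 (x y : DoobVertex m n) : DoobVertex m n :=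
  (fun i => x.1 i + rr (y.1 i - x.1 i), y.2)

lemma sig3_uA (x : DoobVertex m n) (i : Fin m) (s : ZMod 4 × ZMod 4) :
    sig3 x (uA x i s) = uA x i (rr (rr s)) := by
  refine Prod.ext (funext fun j => ?_) (funext fun j => ?_)
  · by_cases hj : j = i
    · subst hj; simp [sig3, uA, Function.update_self]
    · simp [sig3, uA, Function.update_of_ne hj, hr0]
  · simp [sig3, uA, htt0]

lemma sig3_vB (x : DoobVertex m n) (i : Fin n) (t : ZMod 4) :
    sig3 x (vB x i t) = vB x i (tt t) := by
  refine Prod.ext (funext fun j => ?_) (funext fun j => ?_)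
  · simp [sig3, vB, hr0]
  · by_cases hj : j = i
    · subst hj; simp [sig3, vB, Function.update_self]
    · simp [sig3, vB, Function.update_of_ne hj, htt0]

lemma sig6_uA (x : DoobVertex m n) (i : Fin m) (s : ZMod 4 × ZMod 4) :
    sig6 x (uA x i s) = uA x i (rr s) := by
  refine Prod.ext (funext fun j => ?_) rfl
  by_cases hj : j = i
  · subst hj; simp [sig6, uA, Function.update_self]
  · simp [sig6, uA, Function.update_of_ne hj, hr0]

set_option maxHeartbeats 1000000 in
lemma sig3_order (x : DoobVertex m n) : ∀ y, sig3 x (sig3 x (sig3 x y)) = y := by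
  intro y
  refine Prod.ext (funext fun j => ?_) (funext fun j => ?_)
  · simp only [sig3, add_sub_cancel_left]
    rw [show rr (rr (rr (rr (rr (rr (y.1 j - x.1 j)))))) = y.1 j - x.1 j from hr6 _]
    abel
  · simp only [sig3, add_sub_cancel_left, htt3]
    abel

set_option maxHeartbeats 1000000 in
lemma sig6_order (x : DoobVertex m n) :
    ∀ y, sig6 x (sig6 x (sig6 x (sig6 x (sig6 x (sig6 x y))))) = y := by
  intro y
  refine Prod.ext (funext fun j => ?_) rfl
  simp only [sig6, add_sub_cancel_left]
  rw [hr6]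
  abel

end DoobAux

theorem stmt_1 (m n b : ℕ) (f : DoobVertex m n → Fin 2)
    (hf : IsPerfectBCColoring (doobGraph m n) f b 1) :
    3 ∣ b ∧ (n = 0 → 6 ∣ b) := by
  classical
  obtain ⟨a, d, hsurj, hcount⟩ := hf
  obtain ⟨x, hx⟩ := hsurj 0
  set N1 : Set (DoobVertex m n) := {y | (doobGraph m n).Adj x y ∧ f y = 1} with hN1
  have hfin : N1.Finite := Set.toFinite _
  have hb : N1.ncard = b := by
    have h := hcount x 1
    rw [hx] at h
    simpa using h
  -- key closure property from the (·,1)-coloring hypothesis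
  have key : ∀ y z, (doobGraph m n).Adj x y → f y = 1 → (doobGraph m n).Adj x z →
      (doobGraph m n).Adj y z → f z = 1 := by
    intro y z hxy hy hxz hyz
    by_contra hz1
    have hz : f z = 0 := by
      have : ∀ c : Fin 2, c ≠ 1 → c = 0 := by decide
      exact this _ hz1
    have h1 : {w | (doobGraph m n).Adj y w ∧ f w = 0}.ncard = 1 := by
      have h := hcount y 0
      rw [hy] at h
      simpa using h
    obtain ⟨w, hw⟩ := Set.ncard_eq_one.mp h1
    have hxw : x ∈ {w | (doobGraph m n).Adj y w ∧ f w = 0} := ⟨hxy.symm, hx⟩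
    have hzw : z ∈ {w | (doobGraph m n).Adj y w ∧ f w = 0} := ⟨hyz, hz⟩
    rw [hw, Set.mem_singleton_iff] at hxw hzw
    exact hxz.ne (hxw.trans hzw.symm)
  -- structure of neighbors of x
  have hstruct : ∀ y, (doobGraph m n).Adj x y →
      (∃ i s, s ∈ DoobAux.SS ∧ y = DoobAux.uA x i s) ∨
      (∃ i t, t ≠ 0 ∧ y = DoobAux.vB x i t) := by
    intro y hadj
    rcases (DoobAux.doob_adj_iff x y).mp hadj with ⟨i, hsh, hrest, h2⟩ | ⟨i, hne2, hrest, h1⟩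
    · left
      refine ⟨i, y.1 i - x.1 i, ?_, ?_⟩
      · have h := (DoobAux.shrik_adj_iff _ _).mp hsh
        have := DoobAux.hSneg _ h
        rwa [neg_sub] at this
      · refine Prod.ext (funext fun j => ?_) h2.symm
        by_cases hj : j = i
        · subst hj; simp [DoobAux.uA]
        · simp [DoobAux.uA, Function.update_of_ne hj, hrest j hj]
    · right
      refine ⟨i, y.2 i - x.2 i, sub_ne_zero_of_ne (Ne.symm hne2), ?_⟩
      refine Prod.ext h1.symm (funext fun j => ?_)
      by_cases hj : j = i
      · subst hj; simp [DoobAux.vB]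
      · simp [DoobAux.vB, Function.update_of_ne hj, hrest j hj]
  -- part 1 : 3 ∣ b
  have hclosed3 : ∀ y ∈ N1, DoobAux.sig3 x y ∈ N1 := by
    rintro y ⟨hadj, hy⟩
    rcases hstruct y hadj with ⟨i, s, hs, rfl⟩ | ⟨i, t, ht, rfl⟩
    · obtain ⟨h1, h2, -⟩ := DoobAux.hSr s hs
      obtain ⟨h3, h4, -⟩ := DoobAux.hSr _ h1
      have e1 : f (DoobAux.uA x i (DoobAux.rr s)) = 1 :=
        key _ _ hadj hy (DoobAux.adj_x_uA x i h1)
          (DoobAux.adj_uA_uA x i (by have := DoobAux.hSneg _ h2; rwa [neg_sub] at this))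
      have e2 : f (DoobAux.uA x i (DoobAux.rr (DoobAux.rr s))) = 1 :=
        key _ _ (DoobAux.adj_x_uA x i h1) e1 (DoobAux.adj_x_uA x i h3)
          (DoobAux.adj_uA_uA x i (by have := DoobAux.hSneg _ h4; rwa [neg_sub] at this))
      rw [DoobAux.sig3_uA]
      exact ⟨DoobAux.adj_x_uA x i h3, e2⟩
    · obtain ⟨h1, h2, -⟩ := DoobAux.httne t ht
      rw [DoobAux.sig3_vB]
      exact ⟨DoobAux.adj_x_vB x i h1,
        key _ _ hadj hy (DoobAux.adj_x_vB x i h1) (DoobAux.adj_vB_vB x i (Ne.symm h2))⟩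
  have hfree3 : ∀ y ∈ N1, ∀ j, 0 < j → j < 3 → (DoobAux.sig3 x)^[j] y ≠ y := by
    rintro y ⟨hadj, hy⟩ j hj1 hj2
    interval_cases j
    · show DoobAux.sig3 x y ≠ y
      rcases hstruct y hadj with ⟨i, s, hs, rfl⟩ | ⟨i, t, ht, rfl⟩
      · rw [DoobAux.sig3_uA]
        intro h
        exact (DoobAux.hSr s hs).2.2.2.1 (DoobAux.uA_inj x i h)
      · rw [DoobAux.sig3_vB]
        intro h
        exact (DoobAux.httne t ht).2.1 (DoobAux.vB_inj x i h)
    · show DoobAux.sig3 x (DoobAux.sig3 x y) ≠ y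
      rcases hstruct y hadj with ⟨i, s, hs, rfl⟩ | ⟨i, t, ht, rfl⟩
      · rw [DoobAux.sig3_uA, DoobAux.sig3_uA]
        intro h
        exact (DoobAux.hSr s hs).2.2.2.2.2.1 (DoobAux.uA_inj x i h)
      · rw [DoobAux.sig3_vB, DoobAux.sig3_vB]
        intro h
        exact (DoobAux.httne t ht).2.2 (DoobAux.vB_inj x i h)
  have h3 : 3 ∣ b := by
    rw [← hb, Set.ncard_eq_toFinset_card N1 hfin]
    refine DoobAux.dvd_card_of_orbits 3 (by norm_num) (DoobAux.sig3 x)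
      (fun y => DoobAux.sig3_order x y) _ ?_ ?_
    · intro y hy
      rw [Set.Finite.mem_toFinset] at hy ⊢
      exact hclosed3 y hy
    · intro y hy j hj1 hj2
      exact hfree3 y (hfin.mem_toFinset.mp hy) j hj1 hj2
  refine ⟨h3, fun hn => ?_⟩
  subst hn
  -- part 2 : 6 ∣ b when n = 0
  have hstruct' : ∀ y, (doobGraph m 0).Adj x y →
      ∃ i s, s ∈ DoobAux.SS ∧ y = DoobAux.uA x i s := by
    intro y hadj
    rcases hstruct y hadj with h | ⟨i, _, _, _⟩
    · exact h
    · exact i.elim0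
  have hclosed6 : ∀ y ∈ N1, DoobAux.sig6 x y ∈ N1 := by
    rintro y ⟨hadj, hy⟩
    obtain ⟨i, s, hs, rfl⟩ := hstruct' y hadj
    obtain ⟨h1, h2, -⟩ := DoobAux.hSr s hs
    have e1 : f (DoobAux.uA x i (DoobAux.rr s)) = 1 :=
      key _ _ hadj hy (DoobAux.adj_x_uA x i h1)
        (DoobAux.adj_uA_uA x i (by have := DoobAux.hSneg _ h2; rwa [neg_sub] at this))
    rw [DoobAux.sig6_uA]
    exact ⟨DoobAux.adj_x_uA x i h1, e1⟩
  have hfree6 : ∀ y ∈ N1, ∀ j, 0 < j → j < 6 → (DoobAux.sig6 x)^[j] y ≠ y := by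
    rintro y ⟨hadj, hy⟩ j hj1 hj2
    obtain ⟨i, s, hs, rfl⟩ := hstruct' y hadj
    have H := DoobAux.hSr s hs
    interval_cases j
    · show DoobAux.sig6 x _ ≠ _
      rw [DoobAux.sig6_uA]
      exact fun h => H.2.2.1 (DoobAux.uA_inj x i h)
    · show DoobAux.sig6 x (DoobAux.sig6 x _) ≠ _
      rw [DoobAux.sig6_uA, DoobAux.sig6_uA]
      exact fun h => H.2.2.2.1 (DoobAux.uA_inj x i h)
    · show DoobAux.sig6 x (DoobAux.sig6 x (DoobAux.sig6 x _)) ≠ _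
      rw [DoobAux.sig6_uA, DoobAux.sig6_uA, DoobAux.sig6_uA]
      exact fun h => H.2.2.2.2.1 (DoobAux.uA_inj x i h)
    · show DoobAux.sig6 x (DoobAux.sig6 x (DoobAux.sig6 x (DoobAux.sig6 x _))) ≠ _
      rw [DoobAux.sig6_uA, DoobAux.sig6_uA, DoobAux.sig6_uA, DoobAux.sig6_uA]
      exact fun h => H.2.2.2.2.2.1 (DoobAux.uA_inj x i h)
    · show DoobAux.sig6 x (DoobAux.sig6 x (DoobAux.sig6 x (DoobAux.sig6 x (DoobAux.sig6 x _)))) ≠ _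
      rw [DoobAux.sig6_uA, DoobAux.sig6_uA, DoobAux.sig6_uA, DoobAux.sig6_uA, DoobAux.sig6_uA]
      exact fun h => H.2.2.2.2.2.2 (DoobAux.uA_inj x i h)
  rw [← hb, Set.ncard_eq_toFinset_card N1 hfin]
  refine DoobAux.dvd_card_of_orbits 6 (by norm_num) (DoobAux.sig6 x)
    (fun y => DoobAux.sig6_order x y) _ ?_ ?_
  · intro y hy
    rw [Set.Finite.mem_toFinset] at hy ⊢
    exact hclosed6 y hy
  · intro y hy j hj1 hj2
    exact hfree6 y (hfin.mem_toFinset.mp hy) j hj1 hj2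
end

section
/- Suppose there exists a perfect (b,c)-coloring of the Doob graph D(m,n) (with b,c ≥ 1 and 2m+n ≥ 1). Then: (1) (b+c)/gcd(b,c) = 2^k for some positive integer k; (2) b+c = 4i for some i in {1,...,2m+n}; (3) if c = 1 then b = 4^l − 1 for some positive integer l and n ≠ 0, and symmetrically if b = 1 then c = 4^l − 1 for some positive integer l and n ≠ 0. -/
open SimpleGraph

/-!
Double counting the edges between the colour classes gives `N₀ * b = N₁ * c` with
`N₀ + N₁ = 4 ^ (2m + n)`, so `(b + c) / gcd b c` divides a power of two.

The function equal to `b` on colour 0 and `-c` on colour 1 is an eigenvector of the Doob graph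
with eigenvalue `a - c`, where `a` is the number of colour-0 neighbours of a colour-0 vertex.
The Doob graph is a Cayley graph on `(ℤ/4)^(2m+n)`, so each eigenvalue is a character sum over
the connection set; with `ℤ[i]`-valued characters these are `∑ᵢ (6 - 4kᵢ) + ∑ⱼ (3 - 4lⱼ)` with
`kᵢ ≤ 2`, `lⱼ ≤ 1`, and `a + b = 6m + 3n` turns this into `b + c = 4 (∑ kᵢ + ∑ lⱼ)`.

If `c = 1`, no vertex of colour 1 has two neighbours of colour 0, so the neighbours of a
colour-0 vertex inside one Shrikhande or `K₄` factor all share a colour (in the Shrikhande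
graph, a vertex set containing an edge and closed under common neighbours of two of its members
is everything). Hence `b = 6p + 3q` with `q ≤ n`. As `b + 1 = 2 ^ k`, divisibility of `b` by 3
forces `k` to be even, and `n = 0` would make `b` even, contradicting `4 ∣ b + 1`.
-/

open Finset

theorem exists_add_eq_gcd_mul_two_pow {b c N₀ N₁ e : ℕ} (hb : 0 < b) (hc : 0 < c)
    (hsum : N₀ + N₁ = 2 ^ e) (hbal : N₀ * b = N₁ * c) :
    ∃ k, 0 < k ∧ b + c = Nat.gcd b c * 2 ^ k := by
  obtain ⟨b', c', hcop, hb', hc'⟩ := Nat.exists_coprime b c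
  set g := Nat.gcd b c
  have hg : 0 < g := Nat.gcd_pos_of_pos_left c hb
  have key : (b' + c') * N₀ = 2 ^ e * c' := by
    refine Nat.eq_of_mul_eq_mul_right hg ?_
    calc (b' + c') * N₀ * g = N₀ * b + N₀ * c := by rw [hb', hc']; ring
      _ = (N₀ + N₁) * c := by rw [hbal]; ring
      _ = 2 ^ e * c' * g := by rw [hsum, hc']; ring
  obtain ⟨k, -, hk⟩ := (Nat.dvd_prime_pow Nat.prime_two).1 <|
    (Nat.coprime_add_self_left.2 hcop).dvd_of_dvd_mul_right (Dvd.intro N₀ key)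
  have hb'_pos : 0 < b' := Nat.pos_of_ne_zero fun h => by rw [h, zero_mul] at hb'; omega
  have hc'_pos : 0 < c' := Nat.pos_of_ne_zero fun h => by rw [h, zero_mul] at hc'; omega
  refine ⟨k, Nat.pos_of_ne_zero ?_, ?_⟩
  · rintro rfl
    omega
  · rw [← hk, hb', hc']
    ring

theorem exists_eq_four_pow_sub_one {b k : ℕ} (hbk : b + 1 = 2 ^ k) (hk : 0 < k) (hb : 3 ∣ b) :
    ∃ l, 0 < l ∧ b = 4 ^ l - 1 := by
  have h2 : ∀ l, 2 ^ (2 * l) = 4 ^ l := fun l => by rw [pow_mul]; norm_num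
  obtain ⟨l, rfl | rfl⟩ := Nat.even_or_odd' k
  · rw [h2] at hbk
    exact ⟨l, by omega, by omega⟩
  · rw [pow_succ, h2] at hbk
    have : 4 ^ l % 3 = 1 := by simp [Nat.pow_mod]
    omega

theorem Pi.single_eq_single_iff {ι M : Type*} [DecidableEq ι] [Zero M] {i j : ι} {s t : M}
    (hs : s ≠ 0) : (Pi.single i s : ι → M) = Pi.single j t ↔ i = j ∧ s = t := by
  refine ⟨fun h => ?_, fun ⟨hij, hst⟩ => hij ▸ hst ▸ rfl⟩
  obtain rfl : i = j := by
    by_contra hij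
    simpa [Pi.single_eq_of_ne hij, hs] using congrFun h i
  exact ⟨rfl, Pi.single_injective i h⟩

theorem exists_single_eq_sub_iff {ι M : Type*} [DecidableEq ι] [AddGroup M] (P : M → Prop)
    (g h : ι → M) :
    (∃ i s, P s ∧ Pi.single i s = h - g) ↔ ∃ i, P (h i - g i) ∧ ∀ j ≠ i, g j = h j := by
  constructor
  · rintro ⟨i, s, hs, hsi⟩
    have hi := congrFun hsi i
    rw [Pi.single_eq_same, Pi.sub_apply] at hi
    refine ⟨i, hi ▸ hs, fun j hj => ?_⟩
    simpa [Pi.single_eq_of_ne hj, sub_eq_zero, eq_comm] using congrFun hsi j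
  · rintro ⟨i, hi, hj⟩
    refine ⟨i, _, hi, funext fun j => ?_⟩
    obtain rfl | hji := eq_or_ne j i
    · simp
    · simp [Pi.single_eq_of_ne hji, hj j hji]

section PerfectColoring

variable {V C : Type*} {G : SimpleGraph V} {f : V → C} {S : Matrix C C ℕ}

theorem IsPerfectColoring.card_neighborFinset_filter [Fintype V] [DecidableRel G.Adj]
    [DecidableEq C] (hf : IsPerfectColoring G f S) (x : V) (c : C) :
    #{u ∈ G.neighborFinset x | f u = c} = S (f x) c := by
  rw [← hf.2 x c, ← Set.ncard_coe_finset]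
  congr 1
  ext u
  simp

theorem IsPerfectColoring.sum_row_eq_degree [Fintype V] [DecidableRel G.Adj] [Fintype C]
    [DecidableEq C] (hf : IsPerfectColoring G f S) (x : V) :
    ∑ c, S (f x) c = G.degree x := by
  rw [← card_neighborFinset_eq_degree,
    card_eq_sum_card_fiberwise (f := f) (t := univ) (fun _ _ => mem_coe.2 (mem_univ _))]
  simp only [hf.card_neighborFinset_filter]

theorem IsPerfectColoring.card_mul_eq_card_mul [Fintype V] [DecidableRel G.Adj] [DecidableEq C]
    (hf : IsPerfectColoring G f S) (i j : C) :
    #{x | f x = i} * S i j = #{x | f x = j} * S j i := by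
  have h := sum_card_bipartiteAbove_eq_sum_card_bipartiteBelow
    (s := {x | f x = i}) (t := {x | f x = j}) G.Adj
  have hfib : ∀ {x k}, #{y ∈ ({y | f y = k} : Finset V) | G.Adj x y} = S (f x) k := by
    intro x k
    rw [← hf.card_neighborFinset_filter]
    congr 1
    ext y
    simp [and_comm]
  simp only [bipartiteAbove, bipartiteBelow, G.adj_comm _ _, hfib] at h
  rwa [sum_congr rfl fun x hx => by rw [(mem_filter.1 hx).2], sum_const, smul_eq_mul,
    sum_congr rfl fun x hx => by rw [(mem_filter.1 hx).2], sum_const, smul_eq_mul] at h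

theorem IsPerfectColoring.two_le_of_adj [Finite V] (hf : IsPerfectColoring G f S) {x u w : V}
    (hu : G.Adj x u) (hw : G.Adj x w) (huw : u ≠ w) {c : C} (hfu : f u = c) (hfw : f w = c) :
    2 ≤ S (f x) c := by
  rw [← hf.2 x c, ← Set.ncard_pair huw]
  exact Set.ncard_le_ncard (by rintro y (rfl | rfl) <;> simp_all)

theorem IsPerfectColoring.comp_equiv {D : Type*} (hf : IsPerfectColoring G f S) (e : C ≃ D) :
    IsPerfectColoring G (e ∘ f) (S.submatrix e.symm e.symm) := by
  refine ⟨e.surjective.comp hf.1, fun x c => ?_⟩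
  simp [← hf.2 x (e.symm c), ← Equiv.eq_symm_apply]

end PerfectColoring

section TwoColoring

variable {V : Type*} {G : SimpleGraph V} {f : V → Fin 2} {a b c d : ℕ}

theorem IsPerfectBCColoring.swap (hf : IsPerfectBCColoring G f b c) :
    IsPerfectBCColoring G (Equiv.swap 0 1 ∘ f) c b := by
  obtain ⟨a, d, hf⟩ := hf
  refine ⟨d, a, ?_⟩
  convert hf.comp_equiv (Equiv.swap 0 1) using 1
  ext i j
  fin_cases i <;> fin_cases j <;> rfl

theorem IsPerfectColoring.sum_neighborFinset_eigenvector [Fintype V] [DecidableRel G.Adj]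
    {R : Type*} [CommRing R] (hf : IsPerfectColoring G f !![a, b; c, d]) (hreg : a + b = c + d)
    (v : V) :
    ∑ u ∈ G.neighborFinset v, ![(b : R), -c] (f u) = (a - c) * ![(b : R), -c] (f v) := by
  have hfib : ∀ k, ∑ u ∈ G.neighborFinset v with f u = k, ![(b : R), -c] (f u) =
      !![a, b; c, d] (f v) k • ![(b : R), -c] k := fun k => by
    rw [sum_congr rfl fun u hu => congrArg _ (mem_filter.1 hu).2, sum_const,
      hf.card_neighborFinset_filter]
  have hreg' : (a : R) + b = c + d := by simpa using congrArg (Nat.cast : ℕ → R) hreg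
  rw [← sum_fiberwise _ f, Fin.sum_univ_two, hfib, hfib]
  rcases Fin.exists_fin_two.1 ⟨f v, rfl⟩ with h | h
  · simp only [h, Matrix.of_apply, Matrix.cons_val', Matrix.cons_val_zero, Matrix.cons_val_one,
      Matrix.cons_val_fin_one, nsmul_eq_mul]
    ring
  · simp only [h, Matrix.of_apply, Matrix.cons_val', Matrix.cons_val_zero, Matrix.cons_val_one,
      Matrix.cons_val_fin_one, nsmul_eq_mul]
    linear_combination (c : R) * hreg'

theorem IsPerfectColoring.eq_zero_of_adj_of_adj [Finite V]
    (hf : IsPerfectColoring G f !![a, b; 1, d]) {x u w : V} (hu : G.Adj x u) (hw : G.Adj x w)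
    (huw : u ≠ w) (hfu : f u = 0) (hfw : f w = 0) : f x = 0 := by
  have := hf.two_le_of_adj hu hw huw hfu hfw
  rcases Fin.exists_fin_two.1 ⟨f x, rfl⟩ with h | h <;> simp_all

theorem IsPerfectBCColoring.exists_add_eq_gcd_mul_two_pow [Fintype V] [DecidableRel G.Adj]
    {e : ℕ} (hV : Fintype.card V = 2 ^ e) (hf : IsPerfectBCColoring G f b c) (hb : 0 < b)
    (hc : 0 < c) : ∃ k, 0 < k ∧ b + c = Nat.gcd b c * 2 ^ k := by
  obtain ⟨a, d, hf⟩ := hf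
  refine _root_.exists_add_eq_gcd_mul_two_pow hb hc (e := e) ?_
    (by simpa using hf.card_mul_eq_card_mul 0 1)
  rw [← hV, ← card_univ, card_eq_sum_card_fiberwise (f := f) (s := univ) (t := univ) (by simp),
    Fin.sum_univ_two]

end TwoColoring

section Fourier

variable {A R : Type*} [AddCommGroup A] [Fintype A] [CommRing R] [IsDomain R] [CharZero R]
  (χ : A → AddChar A R) (hχ : ∀ z ≠ 0, ∑ w, χ w z = 0)
include hχ

theorem exists_sum_mul_addChar_ne_zero {y : A → R} (hy : y ≠ 0) :
    ∃ w, ∑ v, y v * χ w (-v) ≠ 0 := by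
  by_contra! h
  refine hy (funext fun v₀ => ?_)
  have inversion : ∑ w, (∑ v, y v * χ w (-v)) * χ w v₀ = Fintype.card A * y v₀ := by
    simp_rw [sum_mul, mul_assoc, ← AddChar.map_add_eq_mul]
    rw [sum_comm, sum_eq_single v₀ (fun v _ hv => ?_) (by simp)]
    · simp [mul_comm]
    · rw [← mul_sum, hχ _ (neg_add_eq_zero.not.2 hv), mul_zero]
  simpa [h] using inversion

theorem exists_eq_sum_addChar_of_sum_add_eq_mul (S : Finset A) {y : A → R} (hy : y ≠ 0) {θ : R}
    (heig : ∀ v, ∑ s ∈ S, y (v + s) = θ * y v) : ∃ w, θ = ∑ s ∈ S, χ w s := by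
  obtain ⟨w, hw⟩ := exists_sum_mul_addChar_ne_zero χ hχ hy
  refine ⟨w, mul_right_cancel₀ hw ?_⟩
  have shift (s : A) : ∑ v, y (v + s) * χ w (-v) = χ w s * ∑ v, y v * χ w (-v) := by
    rw [mul_sum]
    refine Fintype.sum_equiv (Equiv.addRight s) _ _ fun v => ?_
    have : χ w s * χ w (-s) = 1 := by rw [← AddChar.map_add_eq_mul, add_neg_cancel,
      AddChar.map_zero_eq_one]
    simp only [Equiv.coe_addRight, neg_add, AddChar.map_add_eq_mul]
    linear_combination -y (v + s) * χ w (-v) * this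
  calc θ * ∑ v, y v * χ w (-v) = ∑ v, (∑ s ∈ S, y (v + s)) * χ w (-v) := by
        simp_rw [heig, mul_sum, mul_assoc]
    _ = ∑ s ∈ S, ∑ v, y (v + s) * χ w (-v) := by simp_rw [sum_mul]; exact sum_comm
    _ = (∑ s ∈ S, χ w s) * ∑ v, y v * χ w (-v) := by simp_rw [shift, sum_mul]

end Fourier

def shrikhandeConn : Finset (ZMod 4 × ZMod 4) := {(0, 1), (0, 3), (1, 0), (3, 0), (1, 1), (3, 3)}

theorem shrikhande_adj_iff_s2 {p q : ZMod 4 × ZMod 4} :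
    shrikhande.Adj p q ↔ q - p ∈ shrikhandeConn := by
  rw [shrikhande, fromRel_adj]
  simp only [Set.mem_insert_iff, Set.mem_singleton_iff]
  revert p q
  decide

def shrikhandeStep (D : Finset (ZMod 4 × ZMod 4)) : Finset (ZMod 4 × ZMod 4) :=
  D ∪ univ.filter fun r => ∃ p ∈ D, ∃ q ∈ D, p ≠ q ∧ r - p ∈ shrikhandeConn ∧ r - q ∈ shrikhandeConn

theorem shrikhandeStep_thrice_eq_univ :
    ∀ s ∈ shrikhandeConn, shrikhandeStep (shrikhandeStep (shrikhandeStep {0, s})) = univ := by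
  decide

theorem shrikhande_eq_univ_of_closed {T : Set (ZMod 4 × ZMod 4)}
    (hT : ∀ p ∈ T, ∀ q ∈ T, p ≠ q → ∀ r, shrikhande.Adj p r → shrikhande.Adj q r → r ∈ T)
    {s : ZMod 4 × ZMod 4} (hs : shrikhande.Adj 0 s) (h0 : 0 ∈ T) (hsT : s ∈ T) : T = Set.univ := by
  have step (D : Finset (ZMod 4 × ZMod 4)) (hD : ↑D ⊆ T) : ↑(shrikhandeStep D) ⊆ T := by
    intro r hr
    simp only [shrikhandeStep, coe_union, coe_filter, mem_univ, true_and, Set.mem_union,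
      mem_coe, Set.mem_ofPred_eq] at hr
    obtain hr | ⟨p, hp, q, hq, hpq, hpr, hqr⟩ := hr
    exacts [hD hr, hT p (hD hp) q (hD hq) hpq r (shrikhande_adj_iff_s2.2 hpr)
      (shrikhande_adj_iff_s2.2 hqr)]
  have hbase : ↑({0, s} : Finset _) ⊆ T := by simp [Set.insert_subset_iff, h0, hsT]
  have := step _ (step _ (step _ hbase))
  rw [shrikhandeStep_thrice_eq_univ s (by simpa [shrikhande_adj_iff_s2] using hs)] at this
  simpa using this

/-- `t ↦ iᵗ`, where `Zsqrtd.sqrtd` is `i` in `ℤ[i]`. -/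
def zmod4Char : AddChar (ZMod 4) GaussianInt :=
  AddChar.zmodChar 4 (by decide : Zsqrtd.sqrtd ^ 4 = 1)

theorem zmod4Char_eq_one_iff {t : ZMod 4} : zmod4Char t = 1 ↔ t = 0 := by
  revert t
  decide

def shrikhandePairing (p q : ZMod 4 × ZMod 4) : ZMod 4 := p.1 * q.1 + p.2 * q.2

theorem exists_shrikhandePairing_ne_zero {p : ZMod 4 × ZMod 4} (hp : p ≠ 0) :
    ∃ q, shrikhandePairing p q ≠ 0 := by
  revert p
  decide

theorem shrikhande_charSum (p : ZMod 4 × ZMod 4) :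
    ∃ k : ℕ, k ≤ 2 ∧
      ∑ s ∈ shrikhandeConn, zmod4Char (shrikhandePairing p s) = 6 - 4 * (k : GaussianInt) := by
  revert p
  decide

theorem completeGraph_charSum (t : ZMod 4) :
    ∃ k : ℕ, k ≤ 1 ∧ ∑ s ∈ {0}ᶜ, zmod4Char (t * s) = 3 - 4 * (k : GaussianInt) := by
  revert t
  decide

section Doob

variable {m n : ℕ}

def doobConn (m n : ℕ) : Finset (DoobVertex m n) :=
  (univ ×ˢ shrikhandeConn).image (fun p => (Pi.single p.1 p.2, 0)) ∪
    (univ ×ˢ {0}ᶜ).image (fun p => (0, Pi.single p.1 p.2))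

theorem mem_doobConn {δ : DoobVertex m n} : δ ∈ doobConn m n ↔
    (∃ i, ∃ s ∈ shrikhandeConn, Pi.single i s = δ.1) ∧ δ.2 = 0 ∨
      (∃ j, ∃ t ≠ 0, Pi.single j t = δ.2) ∧ δ.1 = 0 := by
  simp only [doobConn, mem_union, mem_image, mem_product, mem_univ, true_and, mem_compl,
    mem_singleton]
  constructor
  · rintro (⟨⟨i, s⟩, hs, rfl⟩ | ⟨⟨j, t⟩, ht, rfl⟩)
    exacts [.inl ⟨⟨i, s, hs, rfl⟩, rfl⟩, .inr ⟨⟨j, t, ht, rfl⟩, rfl⟩]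
  · rintro (⟨⟨i, s, hs, h₁⟩, h₂⟩ | ⟨⟨j, t, ht, h₂⟩, h₁⟩)
    exacts [.inl ⟨(i, s), hs, Prod.ext h₁ h₂.symm⟩, .inr ⟨(j, t), ht, Prod.ext h₁.symm h₂⟩]

theorem sub_mem_doobConn_iff {x y : DoobVertex m n} : y - x ∈ doobConn m n ↔
    (∃ i, shrikhande.Adj (x.1 i) (y.1 i) ∧ (∀ j ≠ i, x.1 j = y.1 j) ∧ x.2 = y.2) ∨
      (∃ i, x.2 i ≠ y.2 i ∧ (∀ j ≠ i, x.2 j = y.2 j) ∧ x.1 = y.1) := by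
  rw [mem_doobConn, Prod.fst_sub, Prod.snd_sub, sub_eq_zero, sub_eq_zero,
    exists_single_eq_sub_iff (· ∈ shrikhandeConn), exists_single_eq_sub_iff (· ≠ 0)]
  simp only [← shrikhande_adj_iff_s2, sub_ne_zero, ne_comm (a := y.2 _), eq_comm (a := y.2),
    eq_comm (a := y.1), ← and_assoc, exists_and_right]

theorem doobGraph_adj_iff {x y : DoobVertex m n} :
    (doobGraph m n).Adj x y ↔ y - x ∈ doobConn m n := by
  rw [doobGraph, fromRel_adj, ← sub_mem_doobConn_iff, ← sub_mem_doobConn_iff]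
  have hsymm : x - y ∈ doobConn m n ↔ y - x ∈ doobConn m n := by
    simp only [sub_mem_doobConn_iff, shrikhande.adj_comm, eq_comm, ne_comm]
  have hne : y - x ∈ doobConn m n → x ≠ y := by
    rintro h rfl
    rw [sub_mem_doobConn_iff] at h
    simp at h
  rw [hsymm, or_self, and_iff_right_of_imp hne]

instance : DecidableRel (doobGraph m n).Adj := fun _ _ => decidable_of_iff' _ doobGraph_adj_iff

theorem sum_doobConn {M : Type*} [AddCommMonoid M] (g : DoobVertex m n → M) :
    ∑ s ∈ doobConn m n, g s =
      ∑ i, ∑ s ∈ shrikhandeConn, g (Pi.single i s, 0) + ∑ j, ∑ t ∈ {0}ᶜ, g (0, Pi.single j t) := by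
  have hsh : ∀ s ∈ shrikhandeConn, s ≠ 0 := by decide
  rw [doobConn, sum_union, sum_image, sum_image, sum_product, sum_product]
  · rintro ⟨j, t⟩ ht ⟨j', t'⟩ _ h
    simpa [Pi.single_eq_single_iff (by simpa using ht : t ≠ 0)] using h
  · rintro ⟨i, s⟩ hs ⟨i', s'⟩ _ h
    simpa [Pi.single_eq_single_iff (hsh s (mem_product.1 hs).2)] using h
  · refine disjoint_left.2 fun δ hδ hδ' => ?_
    simp only [mem_image, mem_product] at hδ hδ'
    obtain ⟨⟨i, s⟩, ⟨-, hs⟩, rfl⟩ := hδ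
    obtain ⟨⟨j, t⟩, -, h⟩ := hδ'
    exact hsh s hs (by simpa using (congrFun (congrArg Prod.fst h) i).symm)

theorem sum_neighborFinset_doobGraph {M : Type*} [AddCommMonoid M] (v : DoobVertex m n)
    (g : DoobVertex m n → M) :
    ∑ u ∈ (doobGraph m n).neighborFinset v, g u = ∑ s ∈ doobConn m n, g (v + s) := by
  have : (doobGraph m n).neighborFinset v = (doobConn m n).map (addLeftEmbedding v) := by
    ext u
    simp only [mem_neighborFinset, doobGraph_adj_iff, mem_map, addLeftEmbedding_apply]
    exact ⟨fun h => ⟨_, h, add_sub_cancel _ _⟩, by rintro ⟨s, hs, rfl⟩; simpa⟩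
  rw [this, sum_map]
  rfl

theorem doobGraph_degree (v : DoobVertex m n) : (doobGraph m n).degree v = 6 * m + 3 * n := by
  rw [← card_neighborFinset_eq_degree, card_eq_sum_ones, sum_neighborFinset_doobGraph,
    sum_doobConn]
  have h6 : #shrikhandeConn = 6 := rfl
  have h3 : #({0}ᶜ : Finset (ZMod 4)) = 3 := rfl
  simp [h6, h3, mul_comm]

theorem card_doobVertex : Fintype.card (DoobVertex m n) = 2 ^ (4 * m + 2 * n) := by
  simp [ZMod.card, pow_add, pow_mul]

def doobPairing (w x : DoobVertex m n) : ZMod 4 :=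
  ∑ i, shrikhandePairing (w.1 i) (x.1 i) + ∑ j, w.2 j * x.2 j

theorem doobPairing_comm (w x : DoobVertex m n) : doobPairing w x = doobPairing x w := by
  simp only [doobPairing, shrikhandePairing, mul_comm]

theorem doobPairing_add (w x y : DoobVertex m n) :
    doobPairing w (x + y) = doobPairing w x + doobPairing w y := by
  simp only [doobPairing, shrikhandePairing, Prod.fst_add, Prod.snd_add, Pi.add_apply, mul_add,
    sum_add_distrib]
  ring

theorem doobPairing_single_fst (w : DoobVertex m n) (i : Fin m) (s : ZMod 4 × ZMod 4) :
    doobPairing w (Pi.single i s, 0) = shrikhandePairing (w.1 i) s := by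
  rw [doobPairing, sum_eq_single i (fun j _ hj => by simp [shrikhandePairing, hj]) (by simp)]
  simp

theorem doobPairing_single_snd (w : DoobVertex m n) (j : Fin n) (t : ZMod 4) :
    doobPairing w (0, Pi.single j t) = w.2 j * t := by
  rw [doobPairing, sum_eq_single (s := univ) j (fun k _ hk => by simp [hk]) (by simp)]
  simp [shrikhandePairing]

def doobChar (w : DoobVertex m n) : AddChar (DoobVertex m n) GaussianInt where
  toFun x := zmod4Char (doobPairing w x)
  map_zero_eq_one' := by simp [doobPairing, shrikhandePairing]
  map_add_eq_mul' x y := by rw [doobPairing_add, AddChar.map_add_eq_mul]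

theorem sum_doobChar_eq_zero {z : DoobVertex m n} (hz : z ≠ 0) : ∑ w, doobChar w z = 0 := by
  have hnontriv : doobChar z ≠ 1 := by
    rw [AddChar.ne_one_iff]
    simp only [doobChar, AddChar.coe_mk, ne_eq, zmod4Char_eq_one_iff]
    obtain h | h : z.1 ≠ 0 ∨ z.2 ≠ 0 := by
      contrapose! hz
      exact Prod.ext hz.1 hz.2
    · obtain ⟨i, hi⟩ := Function.ne_iff.1 h
      obtain ⟨s, hs⟩ := exists_shrikhandePairing_ne_zero hi
      exact ⟨(Pi.single i s, 0), by rwa [doobPairing_single_fst]⟩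
    · obtain ⟨j, hj⟩ := Function.ne_iff.1 h
      exact ⟨(0, Pi.single j 1), by rwa [doobPairing_single_snd, mul_one]⟩
  calc ∑ w, doobChar w z = ∑ w, doobChar z w :=
        sum_congr rfl fun w _ => congrArg zmod4Char (doobPairing_comm w z)
    _ = 0 := AddChar.sum_eq_zero_of_ne_one hnontriv

theorem doob_charSum (w : DoobVertex m n) :
    ∃ k ≤ 2 * m + n,
      ∑ s ∈ doobConn m n, doobChar w s = (6 * m + 3 * n : ℕ) - 4 * (k : GaussianInt) := by
  choose k hk hsum using fun i => shrikhande_charSum (w.1 i)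
  choose l hl hsum' using fun j => completeGraph_charSum (w.2 j)
  refine ⟨∑ i, k i + ∑ j, l j, ?_, ?_⟩
  · refine (add_le_add (sum_le_sum fun i _ => hk i) (sum_le_sum fun j _ => hl j)).trans_eq ?_
    simp [mul_comm]
  · simp only [sum_doobConn, doobChar, AddChar.coe_mk, doobPairing_single_fst,
      doobPairing_single_snd, hsum, hsum', sum_sub_distrib, ← mul_sum, sum_const, card_univ,
      Fintype.card_fin, nsmul_eq_mul]
    push_cast
    ring

variable {a b c d : ℕ} {f : DoobVertex m n → Fin 2}

theorem doobGraph_adj_add_single_fst (v : DoobVertex m n) (i : Fin m)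
    {p q : ZMod 4 × ZMod 4} (h : shrikhande.Adj p q) :
    (doobGraph m n).Adj (v + (Pi.single i p, 0)) (v + (Pi.single i q, 0)) := by
  rw [doobGraph_adj_iff, add_sub_add_left_eq_sub, mem_doobConn]
  exact .inl ⟨⟨i, q - p, shrikhande_adj_iff_s2.1 h, by simp [Pi.single_sub]⟩, by simp⟩

theorem doobGraph_adj_add_single_snd (v : DoobVertex m n) (j : Fin n) {p q : ZMod 4}
    (h : p ≠ q) : (doobGraph m n).Adj (v + (0, Pi.single j p)) (v + (0, Pi.single j q)) := by
  rw [doobGraph_adj_iff, add_sub_add_left_eq_sub, mem_doobConn]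
  exact .inr ⟨⟨j, q - p, sub_ne_zero.2 h.symm, by simp [Pi.single_sub]⟩, by simp⟩

theorem IsPerfectColoring.doob_eq_zero_of_single_fst
    (hf : IsPerfectColoring (doobGraph m n) f !![a, b; 1, d]) {v : DoobVertex m n} (hv : f v = 0)
    {i : Fin m} {s : ZMod 4 × ZMod 4} (hs : s ∈ shrikhandeConn)
    (hs₀ : f (v + (Pi.single i s, 0)) = 0) (p : ZMod 4 × ZMod 4) :
    f (v + (Pi.single i p, 0)) = 0 := by
  suffices {p | f (v + (Pi.single i p, 0)) = 0} = Set.univ by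
    exact Set.eq_univ_iff_forall.1 this p
  refine shrikhande_eq_univ_of_closed (fun p hp q hq hpq r hpr hqr => ?_)
    (by simpa [shrikhande_adj_iff_s2] using hs) (by simpa [Prod.mk_zero_zero] using hv) hs₀
  exact hf.eq_zero_of_adj_of_adj (doobGraph_adj_add_single_fst v i hpr).symm
    (doobGraph_adj_add_single_fst v i hqr).symm (by simpa using hpq) hp hq

theorem IsPerfectColoring.doob_eq_zero_of_single_snd
    (hf : IsPerfectColoring (doobGraph m n) f !![a, b; 1, d]) {v : DoobVertex m n} (hv : f v = 0)
    {j : Fin n} {t : ZMod 4} (ht : t ≠ 0) (ht₀ : f (v + (0, Pi.single j t)) = 0) (p : ZMod 4) :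
    f (v + (0, Pi.single j p)) = 0 := by
  obtain rfl | hp := eq_or_ne p 0
  · simpa [Prod.mk_zero_zero] using hv
  obtain rfl | hpt := eq_or_ne p t
  · exact ht₀
  have h₀ := doobGraph_adj_add_single_snd v j hp
  rw [Pi.single_zero, Prod.mk_zero_zero, add_zero] at h₀
  refine hf.eq_zero_of_adj_of_adj h₀ (doobGraph_adj_add_single_snd v j hpt) ?_ hv ht₀
  simpa [Prod.mk_eq_zero] using ht

theorem IsPerfectColoring.doob_six_dvd_card_fst
    (hf : IsPerfectColoring (doobGraph m n) f !![a, b; 1, d]) {v : DoobVertex m n} (hv : f v = 0)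
    (i : Fin m) : 6 ∣ #{s ∈ shrikhandeConn | f (v + (Pi.single i s, 0)) = 1} := by
  by_cases h : ∃ s ∈ shrikhandeConn, f (v + (Pi.single i s, 0)) = 0
  · obtain ⟨s, hs, hs₀⟩ := h
    simp [hf.doob_eq_zero_of_single_fst hv hs hs₀]
  · push Not at h
    rw [filter_true_of_mem fun s hs => by have := h s hs; omega]
    rfl

theorem IsPerfectColoring.doob_three_dvd_card_snd
    (hf : IsPerfectColoring (doobGraph m n) f !![a, b; 1, d]) {v : DoobVertex m n} (hv : f v = 0)
    (j : Fin n) : 3 ∣ #{t ∈ {0}ᶜ | f (v + (0, Pi.single j t)) = 1} := by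
  by_cases h : ∃ t ∈ ({0}ᶜ : Finset (ZMod 4)), f (v + (0, Pi.single j t)) = 0
  · obtain ⟨t, ht, ht₀⟩ := h
    simp [hf.doob_eq_zero_of_single_snd hv (by simpa using ht) ht₀]
  · push Not at h
    rw [filter_true_of_mem fun t ht => by have := h t ht; omega]
    rfl

theorem IsPerfectBCColoring.doob_exists_eq_six_mul_add_three_mul
    (hf : IsPerfectBCColoring (doobGraph m n) f b 1) : ∃ p q, q ≤ n ∧ b = 6 * p + 3 * q := by
  obtain ⟨a, d, hf⟩ := hf
  obtain ⟨v, hv⟩ := hf.1 0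
  have hb : #{u ∈ (doobGraph m n).neighborFinset v | f u = 1} = b := by
    rw [hf.card_neighborFinset_filter, hv]
    rfl
  rw [card_filter, sum_neighborFinset_doobGraph, sum_doobConn] at hb
  simp only [← card_filter] at hb
  obtain ⟨p, hp⟩ := dvd_sum fun i (_ : i ∈ univ) => hf.doob_six_dvd_card_fst hv i
  obtain ⟨q, hq⟩ := dvd_sum fun j (_ : j ∈ univ) => hf.doob_three_dvd_card_snd hv j
  have hle := sum_le_sum fun j (_ : j ∈ univ) =>
    card_filter_le ({0}ᶜ : Finset (ZMod 4)) fun t => f (v + (0, Pi.single j t)) = 1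
  simp only [card_compl, card_singleton, ZMod.card, sum_const, card_univ, Fintype.card_fin,
    smul_eq_mul] at hle
  exact ⟨p, q, by omega, by omega⟩

theorem IsPerfectBCColoring.doob_exists_add_eq_four_mul
    (hf : IsPerfectBCColoring (doobGraph m n) f b c) (hb : 0 < b) :
    ∃ i, 1 ≤ i ∧ i ≤ 2 * m + n ∧ b + c = 4 * i := by
  obtain ⟨a, d, hf⟩ := hf
  have hdeg (x : DoobVertex m n) :
      !![a, b; c, d] (f x) 0 + !![a, b; c, d] (f x) 1 = 6 * m + 3 * n := by
    rw [← Fin.sum_univ_two (f := !![a, b; c, d] (f x)), hf.sum_row_eq_degree, doobGraph_degree]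
  obtain ⟨v₀, hv₀⟩ := hf.1 0
  obtain ⟨v₁, hv₁⟩ := hf.1 1
  have hab : a + b = 6 * m + 3 * n := by simpa [hv₀] using hdeg v₀
  have hcd : c + d = 6 * m + 3 * n := by simpa [hv₁] using hdeg v₁
  set y : DoobVertex m n → GaussianInt := fun v => ![(b : GaussianInt), -c] (f v)
  have hy : y ≠ 0 := fun h => by simpa [y, hv₀, hb.ne'] using congrFun h v₀
  have heig (v : DoobVertex m n) : ∑ s ∈ doobConn m n, y (v + s) = (a - c) * y v := by
    rw [← sum_neighborFinset_doobGraph]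
    exact hf.sum_neighborFinset_eigenvector (hab.trans hcd.symm) v
  obtain ⟨w, hw⟩ :=
    exists_eq_sum_addChar_of_sum_add_eq_mul doobChar (fun _ => sum_doobChar_eq_zero) _ hy heig
  obtain ⟨k, hk, hsum⟩ := doob_charSum w
  have hbc : ((b + c : ℕ) : GaussianInt) = (4 * k : ℕ) := by
    rw [hsum, ← hab] at hw
    push_cast at hw ⊢
    linear_combination -hw
  replace hbc : b + c = 4 * k := by exact_mod_cast hbc
  exact ⟨k, by omega, hk, hbc⟩

theorem IsPerfectBCColoring.doob_of_right_eq_one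
    (hf : IsPerfectBCColoring (doobGraph m n) f b 1) (hb : 0 < b) :
    (∃ l, 0 < l ∧ b = 4 ^ l - 1) ∧ n ≠ 0 := by
  obtain ⟨k, hk, hbk⟩ := hf.exists_add_eq_gcd_mul_two_pow card_doobVertex hb one_pos
  obtain ⟨i, -, -, hbi⟩ := hf.doob_exists_add_eq_four_mul hb
  obtain ⟨p, q, hq, hpq⟩ := hf.doob_exists_eq_six_mul_add_three_mul
  rw [Nat.gcd_one_right, one_mul] at hbk
  exact ⟨exists_eq_four_pow_sub_one hbk hk (by omega), by omega⟩

end Doob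

theorem stmt_2_general (m n b c : ℕ) (hb : 1 ≤ b) (hc : 1 ≤ c)
    (f : DoobVertex m n → Fin 2)
    (hf : IsPerfectBCColoring (doobGraph m n) f b c) :
    (∃ k : ℕ, 0 < k ∧ b + c = Nat.gcd b c * 2 ^ k) ∧
    (∃ i : ℕ, 1 ≤ i ∧ i ≤ 2 * m + n ∧ b + c = 4 * i) ∧
    (c = 1 → (∃ l : ℕ, 0 < l ∧ b = 4 ^ l - 1) ∧ n ≠ 0) ∧
    (b = 1 → (∃ l : ℕ, 0 < l ∧ c = 4 ^ l - 1) ∧ n ≠ 0) := by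
  refine ⟨hf.exists_add_eq_gcd_mul_two_pow card_doobVertex hb hc,
    hf.doob_exists_add_eq_four_mul hb, ?_, ?_⟩
  · rintro rfl
    exact hf.doob_of_right_eq_one hb
  · rintro rfl
    exact hf.swap.doob_of_right_eq_one hc

theorem stmt_2 (m n b c : ℕ) (hb : 1 ≤ b) (hc : 1 ≤ c) (hmn : 1 ≤ 2 * m + n)
    (f : DoobVertex m n → Fin 2)
    (hf : IsPerfectBCColoring (doobGraph m n) f b c) :
    (∃ k : ℕ, 0 < k ∧ b + c = Nat.gcd b c * 2 ^ k) ∧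
    (∃ i : ℕ, 1 ≤ i ∧ i ≤ 2 * m + n ∧ b + c = 4 * i) ∧
    (c = 1 → (∃ l : ℕ, 0 < l ∧ b = 4 ^ l - 1) ∧ n ≠ 0) ∧
    (b = 1 → (∃ l : ℕ, 0 < l ∧ c = 4 ^ l - 1) ∧ n ≠ 0) :=
  stmt_2_general m n b c hb hc f hf
end

section
/- Let 2m + n = 2^k for some positive integer k, and suppose the vertex set of D(m,n) is partitioned into disjoint codes C^i_j (i ∈ {0,1,2,3}, j ∈ {0,...,2^k−1}) such that each C^i_j has code distance at least 3 and, for every i, the union C^i_0 ∪ ... ∪ C^i_{2^k−1} is a 2-MDS code. Then the coloring f assigning color (i,j) to the vertices of C^i_j is a k-multipartite perfect coloring of D(m,n). -/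
open SimpleGraph

def connL : List (ZMod 4 × ZMod 4) := [(0, 1), (0, 3), (1, 0), (3, 0), (1, 1), (3, 3)]

lemma shrik_adj (a b : ZMod 4 × ZMod 4) : shrikhande.Adj a b ↔ b - a ∈ connL := by
  simp only [shrikhande, fromRel_adj, Set.mem_insert_iff, Set.mem_singleton_iff, connL]
  revert a b; decide

lemma doob_adj {m n : ℕ} (x y : DoobVertex m n) : (doobGraph m n).Adj x y ↔
    (∃ i, shrikhande.Adj (x.1 i) (y.1 i) ∧ (∀ j, j ≠ i → x.1 j = y.1 j) ∧ x.2 = y.2) ∨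
    (∃ i, x.2 i ≠ y.2 i ∧ (∀ j, j ≠ i → x.2 j = y.2 j) ∧ x.1 = y.1) := by
  rw [doobGraph, fromRel_adj]
  constructor
  · rintro ⟨-, h | h⟩
    · exact h
    · rcases h with ⟨i, hadj, hj, h2⟩ | ⟨i, hne, hj, h1⟩
      · exact Or.inl ⟨i, hadj.symm, fun j hj' => (hj j hj').symm, h2.symm⟩
      · exact Or.inr ⟨i, hne.symm, fun j hj' => (hj j hj').symm, h1.symm⟩
  · intro h
    refine ⟨?_, Or.inl h⟩
    rcases h with ⟨i, hadj, -, -⟩ | ⟨i, hne, -, -⟩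
    · intro he; exact hadj.ne (by rw [he])
    · intro he; exact hne (by rw [he])

def e6 : Fin 6 → ZMod 4 × ZMod 4 := ![(0, 1), (0, 3), (1, 0), (3, 0), (1, 1), (3, 3)]
def e3 : Fin 3 → ZMod 4 := ![1, 2, 3]

lemma e6_mem : ∀ j : Fin 6, e6 j ∈ connL := by decide
lemma e6_ne : ∀ j : Fin 6, e6 j ≠ 0 := by decide
lemma e6_inj : Function.Injective e6 := by decide
lemma e6_surj : ∀ s ∈ connL, ∃ j, e6 j = s := by decide
lemma e3_ne : ∀ j : Fin 3, e3 j ≠ 0 := by decide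
lemma e3_inj : Function.Injective e3 := by decide
lemma e3_surj : ∀ t : ZMod 4, t ≠ 0 → ∃ j, e3 j = t := by decide

def nbr {m n : ℕ} (x : DoobVertex m n) : (Fin m × Fin 6) ⊕ (Fin n × Fin 3) → DoobVertex m n
  | .inl (i, j) => (Function.update x.1 i (x.1 i + e6 j), x.2)
  | .inr (i, j) => (x.1, Function.update x.2 i (x.2 i + e3 j))

lemma nbr_inj {m n : ℕ} (x : DoobVertex m n) : Function.Injective (nbr x) := by
  rintro (⟨i, j⟩ | ⟨i, j⟩) (⟨i', j'⟩ | ⟨i', j'⟩) hab <;>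
    simp only [nbr, Prod.mk.injEq] at hab
  · rcases eq_or_ne i i' with rfl | hii
    · have := congrFun hab.1 i
      simp only [Function.update_self] at this
      have : e6 j = e6 j' := by
        have h2 : x.1 i + e6 j = x.1 i + e6 j' := this
        exact add_left_cancel h2
      rw [e6_inj this]
    · have := congrFun hab.1 i
      rw [Function.update_self, Function.update_of_ne hii] at this
      exact absurd (add_eq_left.mp this) (e6_ne j)
  · have := congrFun hab.2 i'
    rw [Function.update_self] at this
    exact absurd (left_eq_add.mp this) (e3_ne j')
  · have := congrFun hab.1 i'
    rw [Function.update_self] at this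
    exact absurd (left_eq_add.mp this) (e6_ne j')
  · rcases eq_or_ne i i' with rfl | hii
    · have := congrFun hab.2 i
      simp only [Function.update_self] at this
      have : e3 j = e3 j' := add_left_cancel this
      rw [e3_inj this]
    · have := congrFun hab.2 i
      rw [Function.update_self, Function.update_of_ne hii] at this
      exact absurd (add_eq_left.mp this) (e3_ne j)

lemma nbr_range {m n : ℕ} (x : DoobVertex m n) :
    {y | (doobGraph m n).Adj x y} = Set.range (nbr x) := by
  ext y
  simp only [Set.mem_setOf_eq, Set.mem_range, doob_adj]
  constructor
  · rintro (⟨i, hadj, hj, h2⟩ | ⟨i, hne, hj, h1⟩)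
    · obtain ⟨j, hj6⟩ := e6_surj _ ((shrik_adj _ _).1 hadj)
      refine ⟨.inl (i, j), Prod.ext (funext fun l => ?_) h2⟩
      show Function.update x.1 i (x.1 i + e6 j) l = y.1 l
      rcases eq_or_ne l i with rfl | hl
      · rw [Function.update_self, hj6]; ring
      · rw [Function.update_of_ne hl]; exact hj l hl
    · obtain ⟨j, hj3⟩ := e3_surj (y.2 i - x.2 i) (sub_ne_zero.mpr (Ne.symm hne))
      refine ⟨.inr (i, j), Prod.ext h1 (funext fun l => ?_)⟩
      show Function.update x.2 i (x.2 i + e3 j) l = y.2 l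
      rcases eq_or_ne l i with rfl | hl
      · rw [Function.update_self, hj3]; ring
      · rw [Function.update_of_ne hl]; exact hj l hl
  · rintro ⟨(⟨i, j⟩ | ⟨i, j⟩), rfl⟩
    · refine Or.inl ⟨i, ?_, fun l hl => ?_, rfl⟩
      · show shrikhande.Adj (x.1 i) (Function.update x.1 i (x.1 i + e6 j) i)
        rw [Function.update_self, shrik_adj]
        simpa using e6_mem j
      · show x.1 l = Function.update x.1 i (x.1 i + e6 j) l
        exact (Function.update_of_ne hl _ _).symm
    · refine Or.inr ⟨i, ?_, fun l hl => ?_, rfl⟩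
      · show x.2 i ≠ Function.update x.2 i (x.2 i + e3 j) i
        rw [Function.update_self]
        intro hc
        exact e3_ne j (left_eq_add.mp hc)
      · show x.2 l = Function.update x.2 i (x.2 i + e3 j) l
        exact (Function.update_of_ne hl _ _).symm

lemma nbhd_ncard {m n : ℕ} (x : DoobVertex m n) :
    {y | (doobGraph m n).Adj x y}.ncard = 6 * m + 3 * n := by
  rw [nbr_range, ← Nat.card_coe_set_eq, Nat.card_range_of_injective (nbr_inj x),
    Nat.card_eq_fintype_card]
  simp [Fintype.card_sum, Fintype.card_prod]
  ring

/-- A 2-MDS code in `D(m,n)`: an independent set of cardinality `4 ^ (2m+n-1)`. -/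
def Is2MDS (m n : ℕ) (C : Set (DoobVertex m n)) : Prop :=
  (∀ x ∈ C, ∀ y ∈ C, ¬ (doobGraph m n).Adj x y) ∧
    C.ncard = 4 ^ (2 * m + n - 1)

/-- A `k`-multipartite perfect coloring of `D(m,n)`: a perfect `2^(k+2)`-coloring
with colors `(i,j)`, `i ∈ Fin 4`, `j ∈ Fin (2^k)`, such that every vertex of
color `(i,j)` has exactly one neighbor of each color `(r,s)` with `r ≠ i` and no
neighbor of any color `(r,s)` with `r = i`. -/
def IsMultipartitePerfect (m n k : ℕ)
    (f : DoobVertex m n → Fin 4 × Fin (2 ^ k)) : Prop :=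
  IsPerfectColoring (doobGraph m n) f
    (fun c d => if c.1 = d.1 then 0 else 1)

theorem stmt_5 (m n k : ℕ) (hk : 0 < k) (h : 2 * m + n = 2 ^ k)
    (f : DoobVertex m n → Fin 4 × Fin (2 ^ k))
    (hsurj : Function.Surjective f)
    (hdist : ∀ c : Fin 4 × Fin (2 ^ k), ∀ x ∈ f ⁻¹' {c}, ∀ y ∈ f ⁻¹' {c},
      x ≠ y → 3 ≤ (doobGraph m n).dist x y)
    (hmds : ∀ i : Fin 4, Is2MDS m n {x | (f x).1 = i}) :
    IsMultipartitePerfect m n k f := by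
  refine ⟨hsurj, ?_⟩
  intro x c
  set N : Set (DoobVertex m n) := {y | (doobGraph m n).Adj x y} with hN
  have hA : ∀ y ∈ N, (f y).1 ≠ (f x).1 := by
    intro y hy hc
    exact ((hmds (f x).1).1 x rfl y hc) hy
  have hB : Set.InjOn f N := by
    intro y hy z hz hfz
    by_contra hne
    have hd := hdist (f y) y rfl z hfz.symm hne
    have hw : (doobGraph m n).dist y z ≤ 2 := by
      have hy' : (doobGraph m n).Adj x y := hy
      have hz' : (doobGraph m n).Adj x z := hz
      simpa using SimpleGraph.dist_le (SimpleGraph.Walk.cons hy'.symm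
        (SimpleGraph.Walk.cons hz' SimpleGraph.Walk.nil))
    omega
  have hNcard : N.ncard = 3 * 2 ^ k := by
    rw [hN, nbhd_ncard]
    have : 6 * m + 3 * n = 3 * (2 * m + n) := by ring
    rw [this, h]
  set T : Set (Fin 4 × Fin (2 ^ k)) := {d | d.1 ≠ (f x).1} with hT
  have hTc : Tᶜ.ncard = 2 ^ k := by
    have hcompl : Tᶜ = Set.range (fun j : Fin (2 ^ k) => ((f x).1, j)) := by
      ext d
      simp only [hT, Set.mem_compl_iff, Set.mem_setOf_eq, not_not, Set.mem_range]
      constructor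
      · intro hd; exact ⟨d.2, Prod.ext hd.symm rfl⟩
      · rintro ⟨j, rfl⟩; rfl
    rw [hcompl, ← Nat.card_coe_set_eq,
      Nat.card_range_of_injective (fun a b hab => (Prod.ext_iff.mp hab).2),
      Nat.card_eq_fintype_card, Fintype.card_fin]
  have hTcard : T.ncard = 3 * 2 ^ k := by
    have := Set.ncard_add_ncard_compl T
    rw [hTc, Nat.card_eq_fintype_card, Fintype.card_prod, Fintype.card_fin,
      Fintype.card_fin] at this
    omega
  have himg : f '' N = T := by
    apply Set.eq_of_subset_of_ncard_le
    · rintro _ ⟨y, hy, rfl⟩; exact hA y hy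
    · rw [Set.ncard_image_of_injOn hB, hNcard, hTcard]
    · exact Set.toFinite T
  show {y | (doobGraph m n).Adj x y ∧ f y = c}.ncard
      = if (f x).1 = c.1 then 0 else 1
  by_cases hc : (f x).1 = c.1
  · rw [if_pos hc]
    have hemp : {y | (doobGraph m n).Adj x y ∧ f y = c} = ∅ := by
      ext y
      simp only [Set.mem_setOf_eq, Set.mem_empty_iff_false, iff_false, not_and]
      intro hadj hfc
      exact hA y hadj (by rw [hfc, ← hc])
    rw [hemp, Set.ncard_empty]
  · rw [if_neg hc]
    have hcT : c ∈ T := fun h' => hc h'.symm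
    rw [← himg] at hcT
    obtain ⟨y0, hy0, hfy0⟩ := hcT
    have hsing : {y | (doobGraph m n).Adj x y ∧ f y = c} = {y0} := by
      ext y
      simp only [Set.mem_setOf_eq, Set.mem_singleton_iff]
      constructor
      · rintro ⟨hadj, hfc⟩
        exact hB hadj hy0 (hfc.trans hfy0.symm)
      · rintro rfl
        exact ⟨hy0, hfy0⟩
    rw [hsing, Set.ncard_singleton]
end

section
/- For all nonnegative integers m, n with 2m + n = 4, there exists a 2-multipartite perfect coloring of the Doob graph D(m,n). -/
set_option maxRecDepth 1000000
set_option maxHeartbeats 4000000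


open SimpleGraph

/-! ### Decidability -/

instance shrDec : DecidableRel shrikhande.Adj := fun x y => by
  rw [shrikhande, fromRel_adj]
  simp only [Set.mem_insert_iff, Set.mem_singleton_iff]
  infer_instance

instance doobDec (m n : ℕ) : DecidableRel (doobGraph m n).Adj := fun x y => by
  rw [doobGraph, fromRel_adj]
  infer_instance

/-! ### Counting via finsets and translations -/

lemma ncard_filter {V : Type*} [Fintype V] [DecidableEq V] (p : V → Prop) [DecidablePred p] :
    {y | p y}.ncard = (Finset.univ.filter p).card := by
  rw [← Set.ncard_coe_finset]
  congr 1
  ext y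
  simp

lemma count_translate {V C : Type*} [Fintype V] [DecidableEq V] [DecidableEq C]
    (G : SimpleGraph V) [DecidableRel G.Adj] (f : V → C)
    (T : V → V) (hT : Function.Bijective T)
    (hAdj : ∀ a b, G.Adj (T a) (T b) ↔ G.Adj a b)
    (τ : C → C) (hτ : Function.Injective τ)
    (hf : ∀ y, f (T y) = τ (f y)) (x : V) (c : C) :
    (Finset.univ.filter (fun y => G.Adj (T x) y ∧ f y = τ c)).card =
    (Finset.univ.filter (fun z => G.Adj x z ∧ f z = c)).card := by
  have himg : (Finset.univ.filter (fun y => G.Adj (T x) y ∧ f y = τ c)) =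
      (Finset.univ.filter (fun z => G.Adj x z ∧ f z = c)).image T := by
    ext y
    simp only [Finset.mem_image, Finset.mem_filter, Finset.mem_univ, true_and]
    constructor
    · rintro ⟨hadj, hc⟩
      obtain ⟨z, rfl⟩ := hT.surjective y
      exact ⟨z, ⟨(hAdj _ _).1 hadj, hτ (by rw [← hf]; exact hc)⟩, rfl⟩
    · rintro ⟨z, ⟨hadj, hc⟩, rfl⟩
      exact ⟨(hAdj _ _).2 hadj, by rw [hf, hc]⟩
  rw [himg, Finset.card_image_of_injective _ hT.injective]

lemma shr_translate (t a b : ZMod 4 × ZMod 4) :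
    shrikhande.Adj (t + a) (t + b) ↔ shrikhande.Adj a b := by
  simp only [shrikhande, fromRel_adj, ne_eq, add_right_inj, add_sub_add_left_eq_sub]

lemma doob_translate_add (m n : ℕ) (t x y : DoobVertex m n) :
    (doobGraph m n).Adj (t + x) (t + y) ↔ (doobGraph m n).Adj x y := by
  simp only [doobGraph, fromRel_adj, ne_eq, Prod.fst_add, Prod.snd_add, Pi.add_apply,
    shr_translate, add_right_inj, Prod.mk.injEq, Prod.ext_iff]

/-! ### Color arithmetic -/

def mk4 (k : ℕ) : Fin (2 ^ 2) := ⟨k % 4, Nat.mod_lt _ (by norm_num)⟩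
def mk4' (k : ℕ) : Fin 4 := ⟨k % 4, Nat.mod_lt _ (by norm_num)⟩
def enc (q : ZMod 4 × ZMod 4) : Fin 4 × Fin (2 ^ 2) := (mk4' q.1.val, mk4 q.2.val)

/-! ### Case `D(1,2)` -/

def q12 (x : DoobVertex 1 2) : ZMod 4 × ZMod 4 :=
  (((x.1 0).1 + (x.1 0).2 + x.2 0) - (3 * (x.1 0).1 + 2 * (x.1 0).2 + x.2 1),
    3 * (x.1 0).1 + 2 * (x.1 0).2 + x.2 1)

def f12 (x : DoobVertex 1 2) : Fin 4 × Fin (2 ^ 2) := enc (q12 x)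

def τ12 (a b : Fin 4 × Fin (2 ^ 2)) : Fin 4 × Fin (2 ^ 2) := (a.1 + b.1, a.2 + b.2)
def σ12 (c a : Fin 4 × Fin (2 ^ 2)) : Fin 4 × Fin (2 ^ 2) := (c.1 - a.1, c.2 - a.2)

lemma τ12_cancel : ∀ a c, τ12 a (σ12 c a) = c := by decide
lemma τ12_inj' : ∀ a b b', τ12 a b = τ12 a b' → b = b' := by decide
lemma cond12 : ∀ (a c : Fin 4 × Fin (2 ^ 2)),
    (if (0 : Fin 4) = (σ12 c a).1 then (0 : ℕ) else 1) = if a.1 = c.1 then 0 else 1 := by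
  decide

lemma q12_add (t y : DoobVertex 1 2) : q12 (t + y) = q12 t + q12 y := by
  unfold q12
  refine Prod.ext ?_ ?_ <;>
    simp only [Prod.fst_add, Prod.snd_add, Pi.add_apply] <;> ring

lemma enc_add12 : ∀ a b : ZMod 4 × ZMod 4, enc (a + b) = τ12 (enc a) (enc b) := by decide

lemma hf12 (t y : DoobVertex 1 2) : f12 (t + y) = τ12 (f12 t) (f12 y) := by
  unfold f12
  rw [q12_add, enc_add12]

lemma base12 : ∀ c, ((Finset.univ.filter
    (fun z : DoobVertex 1 2 => (doobGraph 1 2).Adj 0 z ∧ f12 z = c)).card)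
    = if (0 : Fin 4) = c.1 then 0 else 1 := by decide

theorem perfect12 : IsMultipartitePerfect 1 2 2 f12 := by
  refine ⟨by decide, fun x c => ?_⟩
  show {y | (doobGraph 1 2).Adj x y ∧ f12 y = c}.ncard = if (f12 x).1 = c.1 then 0 else 1
  rw [ncard_filter]
  have key := count_translate (doobGraph 1 2) f12 (fun y => x + y)
    (Equiv.addLeft x).bijective (fun a b => doob_translate_add 1 2 x a b)
    (τ12 (f12 x)) (fun a b h => τ12_inj' (f12 x) a b h) (fun y => hf12 x y) 0 (σ12 c (f12 x))
  simp only [add_zero, τ12_cancel] at key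
  rw [key, base12, cond12]

/-! ### Case `D(2,0)` -/

def q20 (x : DoobVertex 2 0) : ZMod 4 × ZMod 4 :=
  ((x.1 0).1 + (x.1 1).1 + (x.1 1).2, (x.1 0).2 + 2 * (x.1 1).1 + 3 * (x.1 1).2)

def enc20 (q : ZMod 4 × ZMod 4) : Fin 4 × Fin (2 ^ 2) :=
  (mk4' (2 * (q.1.val % 2) + q.2.val % 2), mk4 (2 * (q.1.val / 2) + q.2.val / 2))

def dec20 (c : Fin 4 × Fin (2 ^ 2)) : ZMod 4 × ZMod 4 :=
  (((2 * (c.2.val / 2) + c.1.val / 2 : ℕ) : ZMod 4),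
   ((2 * (c.2.val % 2) + c.1.val % 2 : ℕ) : ZMod 4))

def f20 (x : DoobVertex 2 0) : Fin 4 × Fin (2 ^ 2) := enc20 (q20 x)

def τ20 (a b : Fin 4 × Fin (2 ^ 2)) : Fin 4 × Fin (2 ^ 2) := enc20 (dec20 a + dec20 b)
def σ20 (c a : Fin 4 × Fin (2 ^ 2)) : Fin 4 × Fin (2 ^ 2) := enc20 (dec20 c - dec20 a)

lemma τ20_cancel : ∀ a c, τ20 a (σ20 c a) = c := by decide
lemma τ20_inj' : ∀ a b b', τ20 a b = τ20 a b' → b = b' := by decide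
lemma cond20 : ∀ (a c : Fin 4 × Fin (2 ^ 2)),
    (if (0 : Fin 4) = (σ20 c a).1 then (0 : ℕ) else 1) = if a.1 = c.1 then 0 else 1 := by
  decide

lemma q20_add (t y : DoobVertex 2 0) : q20 (t + y) = q20 t + q20 y := by
  unfold q20
  refine Prod.ext ?_ ?_ <;>
    simp only [Prod.fst_add, Prod.snd_add, Pi.add_apply] <;> ring

lemma enc20_add : ∀ a b : ZMod 4 × ZMod 4, enc20 (a + b) = τ20 (enc20 a) (enc20 b) := by decide

lemma hf20 (t y : DoobVertex 2 0) : f20 (t + y) = τ20 (f20 t) (f20 y) := by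
  unfold f20
  rw [q20_add, enc20_add]

lemma base20 : ∀ c, ((Finset.univ.filter
    (fun z : DoobVertex 2 0 => (doobGraph 2 0).Adj 0 z ∧ f20 z = c)).card)
    = if (0 : Fin 4) = c.1 then 0 else 1 := by decide

theorem perfect20 : IsMultipartitePerfect 2 0 2 f20 := by
  refine ⟨by decide, fun x c => ?_⟩
  show {y | (doobGraph 2 0).Adj x y ∧ f20 y = c}.ncard = if (f20 x).1 = c.1 then 0 else 1
  rw [ncard_filter]
  have key := count_translate (doobGraph 2 0) f20 (fun y => x + y)
    (Equiv.addLeft x).bijective (fun a b => doob_translate_add 2 0 x a b)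
    (τ20 (f20 x)) (fun a b h => τ20_inj' (f20 x) a b h) (fun y => hf20 x y) 0 (σ20 c (f20 x))
  simp only [add_zero, τ20_cancel] at key
  rw [key, base20, cond20]

/-! ### Case `D(0,4)` -/

def zxor (a b : ZMod 4) : ZMod 4 := ((a.val ^^^ b.val : ℕ) : ZMod 4)

def mul2 (a : ZMod 4) : ZMod 4 :=
  match a.val with
  | 1 => 2
  | 2 => 3
  | 3 => 1
  | _ => 0

def mul3 (a : ZMod 4) : ZMod 4 :=
  match a.val with
  | 1 => 3
  | 2 => 1
  | 3 => 2
  | _ => 0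

def q04 (x : DoobVertex 0 4) : ZMod 4 × ZMod 4 :=
  (zxor (zxor (x.2 0) (x.2 1)) (zxor (x.2 2) (x.2 3)),
   zxor (x.2 1) (zxor (mul2 (x.2 2)) (mul3 (x.2 3))))

def f04 (x : DoobVertex 0 4) : Fin 4 × Fin (2 ^ 2) := enc (q04 x)

def T04 (t y : DoobVertex 0 4) : DoobVertex 0 4 := (y.1, fun i => zxor (t.2 i) (y.2 i))

def τ04 (a b : Fin 4 × Fin (2 ^ 2)) : Fin 4 × Fin (2 ^ 2) :=
  (mk4' (a.1.val ^^^ b.1.val), mk4 (a.2.val ^^^ b.2.val))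
def σ04 (c a : Fin 4 × Fin (2 ^ 2)) : Fin 4 × Fin (2 ^ 2) := τ04 a c

lemma zxor_cancel : ∀ a b, zxor a (zxor a b) = b := by decide
lemma zxor_zero : ∀ a, zxor a 0 = a := by decide
lemma zxor_inj : ∀ a b c : ZMod 4, (zxor a b = zxor a c) ↔ b = c := by decide
lemma zxor_comm : ∀ a b, zxor a b = zxor b a := by decide
lemma zxor_assoc : ∀ a b c, zxor (zxor a b) c = zxor a (zxor b c) := by decide
lemma zxor_left_comm : ∀ a b c, zxor a (zxor b c) = zxor b (zxor a c) := by decide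
lemma mul2_zxor : ∀ a b, mul2 (zxor a b) = zxor (mul2 a) (mul2 b) := by decide
lemma mul3_zxor : ∀ a b, mul3 (zxor a b) = zxor (mul3 a) (mul3 b) := by decide

lemma T04_invol (t : DoobVertex 0 4) : Function.Involutive (T04 t) := by
  intro y
  refine Prod.ext rfl ?_
  funext i
  exact zxor_cancel _ _

lemma τ04_cancel : ∀ a c, τ04 a (σ04 c a) = c := by decide
lemma τ04_inj' : ∀ a b b', τ04 a b = τ04 a b' → b = b' := by decide
lemma cond04 : ∀ (a c : Fin 4 × Fin (2 ^ 2)),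
    (if (0 : Fin 4) = (σ04 c a).1 then (0 : ℕ) else 1) = if a.1 = c.1 then 0 else 1 := by
  decide

lemma doob_translate_xor (t x y : DoobVertex 0 4) :
    (doobGraph 0 4).Adj (T04 t x) (T04 t y) ↔ (doobGraph 0 4).Adj x y := by
  have hne : (T04 t x = T04 t y) ↔ x = y := (T04_invol t).injective.eq_iff
  simp only [doobGraph, fromRel_adj, ne_eq, hne]
  simp only [T04, funext_iff, Prod.ext_iff, zxor_inj]

lemma q04_xor (t y : DoobVertex 0 4) :
    q04 (T04 t y) = (zxor (q04 t).1 (q04 y).1, zxor (q04 t).2 (q04 y).2) := by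
  unfold q04 T04
  simp only [mul2_zxor, mul3_zxor]
  refine Prod.ext ?_ ?_ <;>
    simp only [zxor_assoc, zxor_left_comm, zxor_comm]

lemma enc_xor04 : ∀ a b : ZMod 4 × ZMod 4,
    enc (zxor a.1 b.1, zxor a.2 b.2) = τ04 (enc a) (enc b) := by decide

lemma hf04 (t y : DoobVertex 0 4) : f04 (T04 t y) = τ04 (f04 t) (f04 y) := by
  unfold f04
  rw [q04_xor]
  exact enc_xor04 _ _

lemma base04 : ∀ c, ((Finset.univ.filter
    (fun z : DoobVertex 0 4 => (doobGraph 0 4).Adj 0 z ∧ f04 z = c)).card)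
    = if (0 : Fin 4) = c.1 then 0 else 1 := by decide

theorem perfect04 : IsMultipartitePerfect 0 4 2 f04 := by
  refine ⟨by decide, fun x c => ?_⟩
  show {y | (doobGraph 0 4).Adj x y ∧ f04 y = c}.ncard = if (f04 x).1 = c.1 then 0 else 1
  rw [ncard_filter]
  have hT0 : T04 x 0 = x := by
    refine Prod.ext (funext fun i => i.elim0) (funext fun i => zxor_zero _)
  have key := count_translate (doobGraph 0 4) f04 (T04 x) ((T04_invol x).bijective)
    (fun a b => doob_translate_xor x a b) (τ04 (f04 x)) (fun a b h => τ04_inj' (f04 x) a b h)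
    (fun y => hf04 x y) 0 (σ04 c (f04 x))
  rw [hT0, τ04_cancel] at key
  rw [key, base04, cond04]

/-! ### Main theorem -/

theorem stmt_6 (m n : ℕ) (h : 2 * m + n = 4) :
    ∃ f : DoobVertex m n → Fin 4 × Fin (2 ^ 2),
      IsMultipartitePerfect m n 2 f := by
  have hmn : (m = 0 ∧ n = 4) ∨ (m = 1 ∧ n = 2) ∨ (m = 2 ∧ n = 0) := by omega
  rcases hmn with ⟨hm, hn⟩ | ⟨hm, hn⟩ | ⟨hm, hn⟩
  · subst hm; subst hn; exact ⟨f04, perfect04⟩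
  · subst hm; subst hn; exact ⟨f12, perfect12⟩
  · subst hm; subst hn; exact ⟨f20, perfect20⟩
end

section
/- If there exists a k-multipartite perfect coloring of the Doob graph D(m,n), then there exists a perfect 2^k-coloring of D(m,n) with quotient matrix 3J (every vertex has exactly 3 neighbors of each of the 2^k colors, including its own). -/
open SimpleGraph

theorem stmt_7 (m n k : ℕ)
    (h : ∃ f : DoobVertex m n → Fin 4 × Fin (2 ^ k),
      IsMultipartitePerfect m n k f) :
    ∃ g : DoobVertex m n → Fin (2 ^ k),
      IsPerfectColoring (doobGraph m n) g
        (fun _ _ => 3) := by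
  obtain ⟨f, hsurj, hcnt⟩ := h
  classical
  refine ⟨fun y => (f y).2, ?_, ?_⟩
  · intro j
    obtain ⟨y, hy⟩ := hsurj (0, j)
    exact ⟨y, by simp [hy]⟩
  · intro x s
    have hset : {y | (doobGraph m n).Adj x y ∧ (f y).2 = s}
        = ↑(Finset.univ.filter (fun y => (doobGraph m n).Adj x y ∧ (f y).2 = s)) := by
      ext y; simp
    rw [hset, Set.ncard_coe_finset]
    have key : ∀ r : Fin 4,
        (Finset.univ.filter (fun y => (doobGraph m n).Adj x y ∧ f y = (r, s))).card
          = if (f x).1 = r then 0 else 1 := by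
      intro r
      have hc := hcnt x (r, s)
      have h2 : {y | (doobGraph m n).Adj x y ∧ f y = (r, s)}
          = ↑(Finset.univ.filter (fun y => (doobGraph m n).Adj x y ∧ f y = (r, s))) := by
        ext y; simp
      rw [h2, Set.ncard_coe_finset] at hc
      exact hc
    rw [Finset.card_eq_sum_card_fiberwise
      (f := fun y => (f y).1) (t := Finset.univ) (fun y _ => Finset.mem_univ _)]
    have hfib : ∀ r : Fin 4,
        ((Finset.univ.filter (fun y => (doobGraph m n).Adj x y ∧ (f y).2 = s)).filter
          (fun y => (f y).1 = r))
        = Finset.univ.filter (fun y => (doobGraph m n).Adj x y ∧ f y = (r, s)) := by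
      intro r; ext y
      simp only [Finset.mem_filter, Finset.mem_univ, true_and, Prod.ext_iff]
      tauto
    simp_rw [hfib, key]
    obtain ⟨a, ha⟩ : ∃ a, (f x).1 = a := ⟨_, rfl⟩
    rw [ha, Fin.sum_univ_four]
    fin_cases a <;> decide
end

section
/- Suppose there is a perfect coloring of the Doob graph D(m,n) with quotient matrix S. Then: (1) for any even positive integer k and any nonnegative integers m', n' with 2m' + n' = kn, there is a perfect coloring of D(mk + m', n') with quotient matrix k·S; (2) for any odd positive integer k and any nonnegative integers m', n' with 2m' + n' = kn and n' ≥ n, there is a perfect coloring of D(mk + m', n') with quotient matrix k·S. -/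
open SimpleGraph

/-!
Both parts come from one construction. Distribute the coordinates of `D(mk + m', n')` over
those of `D(m, n)`: every Shrikhande coordinate of `D(m, n)` receives `k` Shrikhande
coordinates, and every `K₄` coordinate `t` receives `a t` Shrikhande and `k - 2 a t` `K₄`
coordinates, where `∑ a t = m'`. Adding up the coordinates in each fibre, after mapping a
Shrikhande coordinate lying over a `K₄` coordinate to `ZMod 4` by `s ↦ s.1 + s.2`, is a group
homomorphism `ψ`. Both graphs are Cayley graphs, and `s ↦ s.1 + s.2` maps the six Shrikhande
generators two-to-one onto the nonzero elements of `ZMod 4`; hence every edge at `ψ x` lifts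
to exactly `k` edges at `x` and no other neighbour of `x` maps next to `ψ x`. So `g ∘ ψ` is a
perfect coloring with quotient matrix `k • S`. Suitable `a t ≤ k / 2` exist as soon as
`m' ≤ n * (k / 2)`, which is what the parity hypotheses give.
-/

open Finset

theorem Pi.sub_eq_single_iff {ι G : Type*} [DecidableEq ι] [AddGroup G] {f g : ι → G}
    {i : ι} {a : G} : f - g = Pi.single i a ↔ f i - g i = a ∧ ∀ j ≠ i, f j = g j := by
  refine ⟨fun h => ⟨by simpa using congr_fun h i, fun j hj => ?_⟩, fun ⟨ha, h⟩ => ?_⟩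
  · simpa [hj, sub_eq_zero] using congr_fun h j
  · ext j
    by_cases hj : j = i
    · subst hj; simpa using ha
    · simp [hj, h j hj]

theorem Pi.single_eq_single_of_ne_zero {ι G : Type*} [DecidableEq ι] [Zero G] {i j : ι}
    {a b : G} (ha : a ≠ 0) (h : (Pi.single i a : ι → G) = Pi.single j b) : i = j ∧ a = b := by
  have hi := congr_fun h i
  by_cases hij : i = j
  · subst hij; simpa using hi
  · simp [hij, ha] at hi

theorem Pi.addMonoidHomAddEquiv_symm_apply_single {ι : Type*} [Fintype ι] [DecidableEq ι]
    {A : ι → Type*} [∀ i, AddCommMonoid (A i)] {B : Type*} [AddCommMonoid B]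
    (φ : ∀ i, A i →+ B) (i : ι) (a : A i) :
    (Pi.addMonoidHomAddEquiv A B).symm φ (Pi.single i a) = φ i a :=
  DFunLike.congr_fun (congr_fun ((Pi.addMonoidHomAddEquiv A B).apply_symm_apply φ) i) a

theorem SimpleGraph.fromRel_adj_iff_sub_mem {A : Type*} [AddGroup A] {r : A → A → Prop}
    {D : Set A} (hr : ∀ x y, r x y ↔ x - y ∈ D) (hneg : ∀ d ∈ D, -d ∈ D) (hzero : 0 ∉ D)
    {x y : A} : (fromRel r).Adj x y ↔ x - y ∈ D := by
  rw [fromRel_adj, hr, hr, ← neg_sub]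
  refine ⟨fun ⟨_, h⟩ => h.elim id fun h => by simpa using hneg _ h, fun h => ⟨?_, .inl h⟩⟩
  rintro rfl
  exact hzero (by simpa using h)

theorem SimpleGraph.ncard_adj_fiber_eq_card_filter {A B : Type*} [AddCommGroup A]
    [AddCommGroup B] [DecidableEq B] {G : SimpleGraph A} {D : Finset A}
    (hG : ∀ x y, G.Adj x y ↔ x - y ∈ D)
    (ψ : A →+ B) (x : A) (w : B) :
    {y | G.Adj x y ∧ ψ y = w}.ncard = #{d ∈ D | ψ d = ψ x - w} := by
  have : {y | G.Adj x y ∧ ψ y = w} = (x - ·) '' ↑{d ∈ D | ψ d = ψ x - w} := by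
    ext y
    simp only [hG, Set.mem_ofPred_eq, coe_filter, Set.mem_image]
    refine ⟨fun ⟨hy, hψy⟩ => ⟨x - y, ⟨hy, by simp [hψy]⟩, sub_sub_cancel x y⟩, ?_⟩
    rintro ⟨d, ⟨hd, hψd⟩, rfl⟩
    exact ⟨by rwa [sub_sub_cancel], by rw [map_sub, hψd, sub_sub_cancel]⟩
  rw [this, Set.ncard_image_of_injective _ sub_right_injective, Set.ncard_coe_finset]

theorem IsPerfectColoring.comp_of_ncard_fiber {V W C : Type*} [Fintype V] [Fintype W]
    {G : SimpleGraph V} {H : SimpleGraph W} [DecidableRel H.Adj] {g : W → C}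
    {S : Matrix C C ℕ} (hg : IsPerfectColoring H g S) {ψ : V → W} (hψ : Function.Surjective ψ)
    (k : ℕ)
    (hfib : ∀ x w, {y | G.Adj x y ∧ ψ y = w}.ncard = if H.Adj (ψ x) w then k else 0) :
    IsPerfectColoring G (g ∘ ψ) (k • S) := by
  classical
  refine ⟨hg.1.comp hψ, fun x c => ?_⟩
  have hg' := hg.2 (ψ x) c
  simp only [Set.ncard_eq_toFinset_card', Set.toFinset_ofPred] at hfib hg' ⊢
  calc #{y | G.Adj x y ∧ (g ∘ ψ) y = c}
      = ∑ w with g w = c, #{y | G.Adj x y ∧ ψ y = w} := by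
        rw [card_eq_sum_card_fiberwise (f := ψ) (t := {w | g w = c}) (by intro y; simp_all)]
        refine sum_congr rfl fun w hw => congr_arg card ?_
        ext y
        simp only [mem_filter, mem_univ, true_and, Function.comp_apply]
        exact ⟨fun ⟨⟨hxy, _⟩, hy⟩ => ⟨hxy, hy⟩,
          fun ⟨hxy, hy⟩ => ⟨⟨hxy, hy ▸ (mem_filter.1 hw).2⟩, hy⟩⟩
    _ = ∑ w with g w = c, if H.Adj (ψ x) w then k else 0 := sum_congr rfl fun w _ => hfib x w
    _ = k * #{w | H.Adj (ψ x) w ∧ g w = c} := by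
        rw [← sum_filter, sum_const, smul_eq_mul, filter_filter, mul_comm]
        simp only [and_comm]
    _ = (k • S) ((g ∘ ψ) x) c := by rw [hg']; rfl

theorem exists_of_card_filter_pos {α : Type*} [Fintype α] {p : α → Prop} [DecidablePred p]
    (h : 0 < #{x | p x}) : ∃ x, p x :=
  (filter_nonempty_iff.1 (card_pos.1 h)).imp fun _ hx => hx.2

theorem exists_fun_card_fiber_eq {σ : Type*} [Fintype σ] [DecidableEq σ] (sz : σ → ℕ) {D : ℕ}
    (hD : ∑ t, sz t = D) : ∃ f : Fin D → σ, ∀ t, #{i | f i = t} = sz t := by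
  let e : Fin D ≃ Σ t, Fin (sz t) := Fintype.equivOfCardEq (by simp [hD])
  refine ⟨fun i => (e i).1, fun t => ?_⟩
  rw [← Fintype.card_subtype, Fintype.card_congr ((e.subtypeEquiv fun _ => Iff.rfl).trans
    (Equiv.sigmaSubtype t)), Fintype.card_fin]

theorem exists_fin_sum_eq_of_le_mul (c : ℕ) : ∀ {n r : ℕ}, r ≤ n * c →
    ∃ a : Fin n → ℕ, (∀ t, a t ≤ c) ∧ ∑ t, a t = r
  | 0, r, h => ⟨0, fun _ => Nat.zero_le c, by simp_all⟩
  | n + 1, r, h => by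
    obtain ⟨a, ha, hsum⟩ := exists_fin_sum_eq_of_le_mul c (n := n) (r := r - min c r)
      (by rw [Nat.succ_mul] at h; omega)
    refine ⟨Fin.cons (min c r) a, Fin.cases (min_le_left c r) ha, ?_⟩
    rw [Fin.sum_cons, hsum]
    omega

namespace Doob

def shrikhandeGens : Finset (ZMod 4 × ZMod 4) :=
  {(0, 1), (0, 3), (1, 0), (3, 0), (1, 1), (3, 3)}

theorem neg_mem_shrikhandeGens : ∀ s ∈ shrikhandeGens, -s ∈ shrikhandeGens := by decide

theorem zero_notMem_shrikhandeGens : (0 : ZMod 4 × ZMod 4) ∉ shrikhandeGens := by decide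

theorem ne_zero_of_mem_shrikhandeGens {s : ZMod 4 × ZMod 4} (hs : s ∈ shrikhandeGens) :
    s ≠ 0 :=
  ne_of_mem_of_not_mem hs zero_notMem_shrikhandeGens

theorem shrikhande_adj_iff {u v : ZMod 4 × ZMod 4} :
    shrikhande.Adj u v ↔ u - v ∈ shrikhandeGens :=
  fromRel_adj_iff_sub_mem (fun x y => by simp [shrikhandeGens]) neg_mem_shrikhandeGens
    zero_notMem_shrikhandeGens

variable {M N : ℕ}

def shrikhandeCoord (i : Fin M) : ZMod 4 × ZMod 4 →+ DoobVertex M N :=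
  (AddMonoidHom.inl _ _).comp (AddMonoidHom.single (fun _ => ZMod 4 × ZMod 4) i)

def k4Coord (j : Fin N) : ZMod 4 →+ DoobVertex M N :=
  (AddMonoidHom.inr _ _).comp (AddMonoidHom.single (fun _ => ZMod 4) j)

@[simp] theorem shrikhandeCoord_apply (i : Fin M) (s : ZMod 4 × ZMod 4) :
    (shrikhandeCoord i s : DoobVertex M N) = (Pi.single i s, 0) := rfl

@[simp] theorem k4Coord_apply (j : Fin N) (δ : ZMod 4) :
    (k4Coord j δ : DoobVertex M N) = (0, Pi.single j δ) := rfl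

theorem shrikhandeCoord_injective (i : Fin M) :
    Function.Injective (shrikhandeCoord (N := N) i) :=
  fun _ _ h => Pi.single_injective i (congr_arg Prod.fst h)

theorem k4Coord_injective (j : Fin N) : Function.Injective (k4Coord (M := M) j) :=
  fun _ _ h => Pi.single_injective j (congr_arg Prod.snd h)

theorem shrikhandeCoord_eq_shrikhandeCoord_iff {i i' : Fin M} {s s' : ZMod 4 × ZMod 4}
    (hs : s ≠ 0) : shrikhandeCoord (N := N) i s = shrikhandeCoord i' s' ↔ i = i' ∧ s = s' := by
  refine ⟨fun h => Pi.single_eq_single_of_ne_zero hs (congr_arg Prod.fst h), ?_⟩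
  rintro ⟨rfl, rfl⟩
  rfl

theorem k4Coord_eq_k4Coord_iff {j j' : Fin N} {δ δ' : ZMod 4} (hδ : δ ≠ 0) :
    k4Coord (M := M) j δ = k4Coord j' δ' ↔ j = j' ∧ δ = δ' := by
  refine ⟨fun h => Pi.single_eq_single_of_ne_zero hδ (congr_arg Prod.snd h), ?_⟩
  rintro ⟨rfl, rfl⟩
  rfl

theorem shrikhandeCoord_ne_k4Coord {i : Fin M} {j : Fin N} {s : ZMod 4 × ZMod 4} (hs : s ≠ 0)
    (δ : ZMod 4) : shrikhandeCoord i s ≠ k4Coord j δ :=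
  fun h => hs (Pi.single_eq_zero_iff.1 (congr_arg Prod.fst h))

variable (M N) in
def gens : Finset (DoobVertex M N) :=
  (univ.biUnion fun i => shrikhandeGens.image (shrikhandeCoord i)) ∪
    univ.biUnion fun j => ({0}ᶜ : Finset (ZMod 4)).image (k4Coord j)

theorem mem_gens {e : DoobVertex M N} : e ∈ gens M N ↔
    (∃ i, ∃ s ∈ shrikhandeGens, shrikhandeCoord i s = e) ∨ ∃ j, ∃ δ ≠ 0, k4Coord j δ = e := by
  simp [gens]

theorem doobGraph_adj_iff {x y : DoobVertex M N} :
    (doobGraph M N).Adj x y ↔ x - y ∈ gens M N := by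
  refine fromRel_adj_iff_sub_mem ?_ ?_ ?_
  · rintro ⟨x₁, x₂⟩ ⟨y₁, y₂⟩
    rw [Finset.mem_coe, mem_gens]
    simp only [shrikhandeCoord_apply, k4Coord_apply, Prod.mk_sub_mk, Prod.mk.injEq,
      eq_comm (b := _ - _), Pi.sub_eq_single_iff, existsAndEq, true_and, ne_eq, sub_eq_zero,
      shrikhande_adj_iff]
    exact or_congr_right (exists_congr fun _ => and_congr_right' and_comm)
  · simp only [Finset.mem_coe, mem_gens]
    rintro _ (⟨i, s, hs, rfl⟩ | ⟨j, δ, hδ, rfl⟩)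
    · exact .inl ⟨i, -s, neg_mem_shrikhandeGens s hs, map_neg _ s⟩
    · exact .inr ⟨j, -δ, neg_ne_zero.2 hδ, map_neg _ δ⟩
  · simp only [Finset.mem_coe, mem_gens, not_or, not_exists, not_and]
    refine ⟨fun i s hs h => ?_, fun j δ hδ h => hδ ?_⟩
    · rw [map_eq_zero_iff _ (shrikhandeCoord_injective i)] at h
      exact zero_notMem_shrikhandeGens (h ▸ hs)
    · exact (map_eq_zero_iff _ (k4Coord_injective j)).1 h

theorem card_filter_gens (p : DoobVertex M N → Prop) [DecidablePred p] :
    #{e ∈ gens M N | p e} = ∑ i, #{s ∈ shrikhandeGens | p (shrikhandeCoord i s)} +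
      ∑ j, #{δ ∈ ({0}ᶜ : Finset (ZMod 4)) | p (k4Coord j δ)} := by
  rw [gens, filter_union, card_union_of_disjoint, filter_biUnion, filter_biUnion, card_biUnion,
    card_biUnion]
  · simp only [filter_image, card_image_of_injective _ (shrikhandeCoord_injective _),
      card_image_of_injective _ (k4Coord_injective _)]
  · refine fun j _ j' _ hj => disjoint_filter_filter (disjoint_left.2 ?_)
    simp only [mem_image, not_exists, not_and]
    rintro _ ⟨δ, hδ, rfl⟩ δ' _ h
    exact hj (Pi.single_eq_single_of_ne_zero (by simpa using hδ)
      (congr_arg Prod.snd h).symm).1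
  · refine fun i _ i' _ hi => disjoint_filter_filter (disjoint_left.2 ?_)
    simp only [mem_image, not_exists, not_and]
    rintro _ ⟨s, hs, rfl⟩ s' _ h
    exact hi (Pi.single_eq_single_of_ne_zero (ne_zero_of_mem_shrikhandeGens hs)
      (congr_arg Prod.fst h).symm).1
  · refine disjoint_filter_filter (disjoint_left.2 ?_)
    simp only [mem_biUnion, mem_image, mem_univ, true_and, not_exists, not_and]
    rintro _ ⟨i, s, hs, rfl⟩ j δ _ h
    exact shrikhandeCoord_ne_k4Coord (ne_zero_of_mem_shrikhandeGens hs) δ h.symm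

theorem sum_shrikhandeCoord_add_sum_k4Coord (x : DoobVertex M N) :
    ∑ i, shrikhandeCoord i (x.1 i) + ∑ j, k4Coord j (x.2 j) = x := by
  ext <;> simp [Prod.fst_sum, Prod.snd_sum, Finset.univ_sum_single]

def shrikhandeToK4 : ZMod 4 × ZMod 4 →+ ZMod 4 := (AddMonoidHom.id _).coprod (AddMonoidHom.id _)

theorem shrikhandeToK4_ne_zero : ∀ s ∈ shrikhandeGens, shrikhandeToK4 s ≠ 0 := by decide

theorem card_filter_shrikhandeToK4_eq :
    ∀ δ : ZMod 4, δ ≠ 0 → #{s ∈ shrikhandeGens | shrikhandeToK4 s = δ} = 2 := by decide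

variable {m n : ℕ}

def labelCoord : Fin m ⊕ Fin n → ZMod 4 × ZMod 4 →+ DoobVertex m n
  | .inl t => shrikhandeCoord t
  | .inr t => (k4Coord t).comp shrikhandeToK4

@[simp] theorem labelCoord_inl (t : Fin m) (s : ZMod 4 × ZMod 4) :
    labelCoord (n := n) (.inl t) s = shrikhandeCoord t s := rfl

@[simp] theorem labelCoord_inr (t : Fin n) (s : ZMod 4 × ZMod 4) :
    labelCoord (m := m) (.inr t) s = k4Coord t (shrikhandeToK4 s) := rfl

theorem labelCoord_mem_gens (l : Fin m ⊕ Fin n) {s : ZMod 4 × ZMod 4}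
    (hs : s ∈ shrikhandeGens) : labelCoord l s ∈ gens m n := by
  rcases l with t | t
  · exact mem_gens.2 (.inl ⟨t, s, hs, rfl⟩)
  · exact mem_gens.2 (.inr ⟨t, shrikhandeToK4 s, shrikhandeToK4_ne_zero s hs, rfl⟩)

theorem card_filter_labelCoord_eq_shrikhandeCoord (l : Fin m ⊕ Fin n) (t : Fin m)
    {μ : ZMod 4 × ZMod 4} (hμ : μ ∈ shrikhandeGens) :
    #{s ∈ shrikhandeGens | labelCoord l s = shrikhandeCoord t μ} =
      if l = .inl t then 1 else 0 := by
  by_cases hl : l = .inl t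
  · simp [hl, filter_eq', hμ]
  · rw [if_neg hl, card_eq_zero, filter_eq_empty_iff]
    intro s hs h
    rcases l with t' | t'
    · exact hl (congr_arg _ ((shrikhandeCoord_eq_shrikhandeCoord_iff
        (ne_zero_of_mem_shrikhandeGens hs)).1 h).1)
    · exact shrikhandeCoord_ne_k4Coord (ne_zero_of_mem_shrikhandeGens hμ) _ h.symm

theorem card_filter_labelCoord_eq_k4Coord (l : Fin m ⊕ Fin n) (t : Fin n) {δ : ZMod 4}
    (hδ : δ ≠ 0) :
    #{s ∈ shrikhandeGens | labelCoord l s = k4Coord t δ} =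
      2 * if l = .inr t then 1 else 0 := by
  by_cases hl : l = .inr t
  · simp [hl, card_filter_shrikhandeToK4_eq δ hδ]
  · rw [if_neg hl, mul_zero, card_eq_zero, filter_eq_empty_iff]
    intro s hs h
    rcases l with t' | t'
    · exact shrikhandeCoord_ne_k4Coord (ne_zero_of_mem_shrikhandeGens hs) _ h
    · exact hl (congr_arg _ ((k4Coord_eq_k4Coord_iff (shrikhandeToK4_ne_zero s hs)).1 h).1)

/-- `P i` and `Q j` name the coordinate of `D(m, n)` over which the `i`-th Shrikhande and the
`j`-th `K₄` coordinate of `D(M, N)` lie; `foldMap` adds up the coordinates lying over each one. -/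
def foldMap (P : Fin M → Fin m ⊕ Fin n) (Q : Fin N → Fin n) :
    DoobVertex M N →+ DoobVertex m n :=
  ((Pi.addMonoidHomAddEquiv _ _).symm fun i => labelCoord (P i)).coprod
    ((Pi.addMonoidHomAddEquiv _ _).symm fun j => k4Coord (Q j))

variable {P : Fin M → Fin m ⊕ Fin n} {Q : Fin N → Fin n}

@[simp] theorem foldMap_shrikhandeCoord (i : Fin M) (s : ZMod 4 × ZMod 4) :
    foldMap P Q (shrikhandeCoord i s) = labelCoord (P i) s := by
  simp [foldMap, Pi.addMonoidHomAddEquiv_symm_apply_single]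

@[simp] theorem foldMap_k4Coord (j : Fin N) (δ : ZMod 4) :
    foldMap P Q (k4Coord j δ) = k4Coord (Q j) δ := by
  simp [foldMap, Pi.addMonoidHomAddEquiv_symm_apply_single]

theorem card_filter_gens_foldMap {k : ℕ} (hP : ∀ t, #{i | P i = .inl t} = k)
    (hPQ : ∀ t, 2 * #{i | P i = .inr t} + #{j | Q j = t} = k) (d : DoobVertex m n) :
    #{e ∈ gens M N | foldMap P Q e = d} = if d ∈ gens m n then k else 0 := by
  rw [card_filter_gens]
  simp only [foldMap_shrikhandeCoord, foldMap_k4Coord]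
  split_ifs with hd
  · rcases mem_gens.1 hd with ⟨t, μ, hμ, rfl⟩ | ⟨t, δ, hδ, rfl⟩
    · have hK : ∀ j,
          #{δ ∈ ({0}ᶜ : Finset (ZMod 4)) | k4Coord (Q j) δ = shrikhandeCoord t μ} = 0 :=
        fun j => card_eq_zero.2 <| filter_false_of_mem fun δ _ =>
          (shrikhandeCoord_ne_k4Coord (ne_zero_of_mem_shrikhandeGens hμ) δ).symm
      simp only [card_filter_labelCoord_eq_shrikhandeCoord _ t hμ, hK, sum_boole, sum_const_zero,
        add_zero]
      simpa using hP t
    · have hK : ∀ j, #{δ' ∈ ({0}ᶜ : Finset (ZMod 4)) | k4Coord (M := m) (Q j) δ' =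
          k4Coord t δ} = if Q j = t then 1 else 0 := by
        intro j
        by_cases hj : Q j = t
        · simp [hj, filter_eq', hδ]
        · rw [if_neg hj, card_eq_zero, filter_eq_empty_iff]
          exact fun δ' hδ' h => hj ((k4Coord_eq_k4Coord_iff (by simpa using hδ')).1 h).1
      simp only [card_filter_labelCoord_eq_k4Coord _ t hδ, hK, ← mul_sum, sum_boole]
      simpa using hPQ t
  · have hS : ∀ i, {s ∈ shrikhandeGens | labelCoord (P i) s = d} = ∅ := fun i =>
      filter_false_of_mem fun s hs h => hd (h ▸ labelCoord_mem_gens _ hs)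
    have hK : ∀ j, {δ ∈ ({0}ᶜ : Finset (ZMod 4)) | k4Coord (Q j) δ = d} = ∅ := fun j =>
      filter_false_of_mem fun δ hδ h =>
        hd (h ▸ mem_gens.2 (.inr ⟨_, δ, by simpa using hδ, rfl⟩))
    simp only [hS, hK, card_empty, sum_const_zero, add_zero]

theorem foldMap_surjective (hP : ∀ t, ∃ i, P i = .inl t)
    (hPQ : ∀ t, (∃ i, P i = .inr t) ∨ ∃ j, Q j = t) : Function.Surjective (foldMap P Q) := by
  intro x
  rw [← AddMonoidHom.mem_range, ← sum_shrikhandeCoord_add_sum_k4Coord x]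
  refine add_mem (sum_mem fun t _ => ?_) (sum_mem fun t _ => ?_)
  · obtain ⟨i, hi⟩ := hP t
    exact ⟨shrikhandeCoord i (x.1 t), by rw [foldMap_shrikhandeCoord, hi, labelCoord_inl]⟩
  · rcases hPQ t with ⟨i, hi⟩ | ⟨j, hj⟩
    · exact ⟨shrikhandeCoord i (x.2 t, 0), by
        rw [foldMap_shrikhandeCoord, hi, labelCoord_inr]; simp [shrikhandeToK4]⟩
    · exact ⟨k4Coord j (x.2 t), by rw [foldMap_k4Coord, hj]⟩

theorem isPerfectColoring_comp_foldMap {C : Type*} {g : DoobVertex m n → C} {S : Matrix C C ℕ}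
    (hg : IsPerfectColoring (doobGraph m n) g S) {k : ℕ} (hk : 0 < k)
    (hP : ∀ t, #{i | P i = .inl t} = k)
    (hPQ : ∀ t, 2 * #{i | P i = .inr t} + #{j | Q j = t} = k) :
    IsPerfectColoring (doobGraph M N) (g ∘ foldMap P Q) (k • S) := by
  classical
  have hsurj : Function.Surjective (foldMap P Q) := by
    refine foldMap_surjective (fun t => ?_) (fun t => ?_)
    · exact exists_of_card_filter_pos (hP t ▸ hk)
    · rcases Nat.eq_zero_or_pos #{i | P i = .inr t} with h | h
      · exact .inr (exists_of_card_filter_pos (by have := hPQ t; omega))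
      · exact .inl (exists_of_card_filter_pos h)
  refine hg.comp_of_ncard_fiber hsurj k fun x w => ?_
  rw [ncard_adj_fiber_eq_card_filter (fun _ _ => doobGraph_adj_iff),
    card_filter_gens_foldMap hP hPQ]
  simp only [doobGraph_adj_iff]

theorem exists_labels {m n k m' n' : ℕ} (hm' : m' ≤ n * (k / 2)) (h : 2 * m' + n' = k * n) :
    ∃ (P : Fin (m * k + m') → Fin m ⊕ Fin n) (Q : Fin n' → Fin n),
      (∀ t, #{i | P i = .inl t} = k) ∧ ∀ t, 2 * #{i | P i = .inr t} + #{j | Q j = t} = k := by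
  obtain ⟨a, ha, rfl⟩ := exists_fin_sum_eq_of_le_mul (k / 2) hm'
  have ha' : ∀ t, 2 * a t ≤ k := fun t => by have := ha t; omega
  obtain ⟨P, hP⟩ := exists_fun_card_fiber_eq (Sum.elim (fun _ : Fin m => k) a)
    (D := m * k + ∑ t, a t) (by simp [Fintype.sum_sum_type])
  have hn' : ∑ t, (k - 2 * a t) = n' := by
    have : ∑ t, (k - 2 * a t) + 2 * ∑ t, a t = k * n := by
      rw [mul_sum, ← sum_add_distrib, sum_congr rfl fun t _ => Nat.sub_add_cancel (ha' t)]
      simp [mul_comm]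
    omega
  obtain ⟨Q, hQ⟩ := exists_fun_card_fiber_eq (fun t => k - 2 * a t) hn'
  refine ⟨P, Q, fun t => hP (.inl t), fun t => ?_⟩
  rw [hP (.inr t), hQ t, Sum.elim_inr]
  have := ha' t
  omega

end Doob

theorem stmt_9 (m n k₀ : ℕ) (S : Matrix (Fin k₀) (Fin k₀) ℕ)
    (hex : ∃ g : DoobVertex m n → Fin k₀,
      IsPerfectColoring (doobGraph m n) g S) :
    (∀ k m' n' : ℕ, 0 < k → Even k → 2 * m' + n' = k * n →
      ∃ f : DoobVertex (m * k + m') n' → Fin k₀,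
        IsPerfectColoring (doobGraph (m * k + m') n') f (k • S)) ∧
    (∀ k m' n' : ℕ, 0 < k → Odd k → 2 * m' + n' = k * n → n ≤ n' →
      ∃ f : DoobVertex (m * k + m') n' → Fin k₀,
        IsPerfectColoring (doobGraph (m * k + m') n') f (k • S)) := by
  obtain ⟨g, hg⟩ := hex
  have of_le_half : ∀ k m' n' : ℕ, 0 < k → m' ≤ n * (k / 2) → 2 * m' + n' = k * n →
      ∃ f : DoobVertex (m * k + m') n' → Fin k₀,
        IsPerfectColoring (doobGraph (m * k + m') n') f (k • S) := by
    intro k m' n' hk hm' h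
    obtain ⟨P, Q, hP, hPQ⟩ := Doob.exists_labels (m := m) hm' h
    exact ⟨_, Doob.isPerfectColoring_comp_foldMap hg hk hP hPQ⟩
  refine ⟨fun k m' n' hk hk2 h => of_le_half k m' n' hk ?_ h,
    fun k m' n' hk hk2 h hn => of_le_half k m' n' hk ?_ h⟩
  · obtain ⟨c, rfl⟩ := hk2
    rw [show (c + c) / 2 = c by omega]
    nlinarith
  · obtain ⟨c, rfl⟩ := hk2
    rw [show (2 * c + 1) / 2 = c by omega]
    nlinarith
end

section
/- If n = 2^k for some integer k ≥ 2, then there is a 2-MDS code in the Hamming graph H(n,4) (an independent set of cardinality 4^{n−1}) that can be partitioned into 2^k codes, each of code distance at least 3. -/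
/-!
Identify the alphabet `ZMod 4` with the Klein group `G = (ZMod 2)²`, embed `G` additively into
`F = GF(2^k)` by some `φ` (possible as `k ≥ 2`), and index the coordinates by the elements `a i`
of `F`. The words with zero sum form a code of size `4^(n-1)` in which no two words are adjacent.
The syndrome `∑ a i * φ (x i) ∈ F` splits it into `2^k` classes. Two distinct words of a class
cannot differ in one coordinate (their sums would differ), nor in exactly two coordinates `j, l`:
the differences there are `g` and `-g`, so equal syndromes force `(a j - a l) * φ g = 0`.
-/

open SimpleGraph

/-- The Hamming graph `H(n,4)`: vertices are `n`-tuples over a 4-element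
alphabet, two tuples being adjacent iff they differ in exactly one coordinate. -/
def hammingGraph (n : ℕ) : SimpleGraph (Fin n → ZMod 4) :=
  SimpleGraph.fromRel (fun x y =>
    ∃ i, x i ≠ y i ∧ ∀ j, j ≠ i → x j = y j)

open Finset Function

section HammingGraph

variable {n : ℕ}

lemma hammingGraph_adj_iff {x y : Fin n → ZMod 4} :
    (hammingGraph n).Adj x y ↔ hammingDist x y = 1 := by
  have differ_once_iff (x y : Fin n → ZMod 4) :
      (∃ i, x i ≠ y i ∧ ∀ j, j ≠ i → x j = y j) ↔ hammingDist x y = 1 := by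
    simp only [hammingDist, card_eq_one, eq_singleton_iff_unique_mem, mem_filter, mem_univ,
      true_and]
    exact exists_congr fun i => and_congr_right fun _ => forall_congr' fun j => not_imp_comm
  rw [hammingGraph, fromRel_adj, differ_once_iff, differ_once_iff, hammingDist_comm y, or_self]
  exact and_iff_right_of_imp fun h => hammingDist_ne_zero.1 (by omega)

lemma hammingDist_le_length {x y : Fin n → ZMod 4} (w : (hammingGraph n).Walk x y) :
    hammingDist x y ≤ w.length := by
  induction w with
  | nil => simp
  | @cons x z y hxz _ ih =>
    rw [Walk.length_cons]
    have htri := hammingDist_triangle x z y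
    have hstep := hammingGraph_adj_iff.1 hxz
    omega

lemma exists_walk_length_le_hammingDist (x y : Fin n → ZMod 4) :
    ∃ w : (hammingGraph n).Walk x y, w.length ≤ hammingDist x y := by
  induction hd : hammingDist x y using Nat.strong_induction_on generalizing x with
  | _ d ih =>
  obtain rfl | hxy := eq_or_ne x y
  · exact ⟨Walk.nil, by simp⟩
  obtain ⟨i, hi⟩ := Function.ne_iff.1 hxy
  set x' := update x i (y i)
  have hxx' : hammingDist x x' = 1 := by
    rw [hammingDist, card_eq_one]
    refine ⟨i, ext fun j => ?_⟩
    by_cases hj : j = i <;> simp [x', hj, hi]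
  have hx'y : hammingDist x' y < d := by
    have : ({j | x' j ≠ y j} : Finset _) = ({j | x j ≠ y j} : Finset _).erase i := by
      ext j
      by_cases hj : j = i <;> simp [x', hj]
    rw [← hd, hammingDist, hammingDist, this]
    exact card_erase_lt_of_mem (by simpa using hi)
  obtain ⟨w, hw⟩ := ih _ hx'y x' rfl
  exact ⟨.cons (hammingGraph_adj_iff.2 hxx') w, by rw [Walk.length_cons]; omega⟩

lemma hammingGraph_dist (x y : Fin n → ZMod 4) :
    (hammingGraph n).dist x y = hammingDist x y := by
  obtain ⟨w, hw⟩ := exists_walk_length_le_hammingDist x y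
  obtain ⟨p, hp⟩ := w.reachable.exists_walk_length_eq_dist
  exact le_antisymm ((dist_le w).trans hw) (hp ▸ hammingDist_le_length p)

end HammingGraph

section ZeroSumCode

variable (ι G : Type*) [Fintype ι] [AddCommGroup G]

def zeroSumCode : AddSubgroup (ι → G) :=
  (AddMonoidHom.mk' (fun x : ι → G => ∑ i, x i) fun _ _ => sum_add_distrib).ker

variable {ι G}

lemma mem_zeroSumCode {x : ι → G} : x ∈ zeroSumCode ι G ↔ ∑ i, x i = 0 := Iff.rfl

lemma card_zeroSumCode [Nonempty ι] [Finite G] :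
    Nat.card (zeroSumCode ι G) = Nat.card G ^ (Nat.card ι - 1) := by
  classical
  obtain ⟨i₀⟩ := ‹Nonempty ι›
  have hcard := (zeroSumCode ι G).card_mul_index
  rw [zeroSumCode, AddSubgroup.index_ker, AddMonoidHom.range_eq_top.2
    fun g => ⟨Pi.single i₀ g, by simp⟩, Nat.card_fun, AddSubgroup.card_top] at hcard
  rw [← Nat.sub_add_cancel (Nat.card_pos (α := ι)), pow_succ] at hcard
  exact Nat.eq_of_mul_eq_mul_right Nat.card_pos hcard

lemma hammingNorm_ne_one_of_mem_zeroSumCode [DecidableEq G] {d : ι → G}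
    (hd : d ∈ zeroSumCode ι G) : hammingNorm d ≠ 1 := by
  intro h
  obtain ⟨j, hj⟩ := card_eq_one.1 h
  have hdj : j ∈ ({i | d i ≠ 0} : Finset ι) := hj ▸ mem_singleton_self j
  rw [mem_zeroSumCode, ← sum_filter_ne_zero, hj, sum_singleton] at hd
  exact (mem_filter.1 hdj).2 hd

lemma hammingDist_ne_one_of_mem_zeroSumCode [DecidableEq G] {x y : ι → G}
    (hx : x ∈ zeroSumCode ι G) (hy : y ∈ zeroSumCode ι G) : hammingDist x y ≠ 1 := by
  rw [hammingDist_eq_hammingNorm]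
  exact hammingNorm_ne_one_of_mem_zeroSumCode (add_mem (neg_mem hx) hy)

end ZeroSumCode

section Syndrome

variable {ι G F : Type*} [Fintype ι] [AddCommGroup G]

section Ring

variable [Ring F] (a : ι → F) (φ : G →+ F)

def syndrome : (ι → G) →+ F where
  toFun x := ∑ i, a i * φ (x i)
  map_zero' := by simp
  map_add' x y := by simp [mul_add, sum_add_distrib]

lemma syndrome_apply (x : ι → G) : syndrome a φ x = ∑ i, a i * φ (x i) := rfl

def syndromeFiber (f : F) : Set (ι → G) := zeroSumCode ι G ∩ syndrome a φ ⁻¹' {f}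

lemma disjoint_syndromeFiber {f f' : F} (h : f ≠ f') :
    Disjoint (syndromeFiber a φ f) (syndromeFiber a φ f') :=
  ((Set.disjoint_singleton.2 h).preimage _).mono Set.inter_subset_right Set.inter_subset_right

lemma iUnion_syndromeFiber (ha : Surjective a) :
    ⋃ i, syndromeFiber a φ (a i) = zeroSumCode ι G := by
  ext x
  simp only [syndromeFiber, Set.mem_iUnion, Set.mem_inter_iff, Set.mem_preimage,
    Set.mem_singleton_iff, exists_and_left, and_iff_left_iff_imp]
  exact fun _ => (ha _).imp fun _ => Eq.symm

lemma three_le_hammingNorm [NoZeroDivisors F] [DecidableEq G] {a : ι → F} {φ : G →+ F}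
    (ha : Injective a) (hφ : Injective φ) {d : ι → G} (hd : d ∈ zeroSumCode ι G)
    (hs : syndrome a φ d = 0) (hd0 : d ≠ 0) : 3 ≤ hammingNorm d := by
  classical
  have hne1 := hammingNorm_ne_one_of_mem_zeroSumCode hd
  have hne0 := hammingNorm_ne_zero_iff.2 hd0
  by_contra! hlt
  obtain ⟨j, l, hjl, hsupp⟩ := card_eq_two.1 (show hammingNorm d = 2 by omega)
  have hdj : j ∈ ({i | d i ≠ 0} : Finset ι) := hsupp ▸ mem_insert_self j {l}
  have hsum : d j + d l = 0 := by
    rw [← sum_pair hjl, ← hsupp, sum_filter_ne_zero]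
    exact hd
  have hsyn : a j * φ (d j) + a l * φ (d l) = 0 := by
    rw [← sum_pair (f := fun i => a i * φ (d i)) hjl, ← hsupp]
    rw [sum_filter_of_ne (p := (d · ≠ 0)) fun i _ h hi => h (by simp [hi])]
    exact hs
  rw [eq_neg_of_add_eq_zero_right hsum, map_neg, mul_neg, ← sub_eq_add_neg, ← sub_mul] at hsyn
  rcases mul_eq_zero.1 hsyn with h | h
  · exact hjl (ha (sub_eq_zero.1 h))
  · exact (mem_filter.1 hdj).2 ((map_eq_zero_iff φ hφ).1 h)

lemma three_le_hammingDist_of_mem_syndromeFiber [NoZeroDivisors F] [DecidableEq G]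
    {a : ι → F} {φ : G →+ F} (ha : Injective a) (hφ : Injective φ) {f : F} {x y : ι → G}
    (hx : x ∈ syndromeFiber a φ f) (hy : y ∈ syndromeFiber a φ f) (hxy : x ≠ y) :
    3 ≤ hammingDist x y := by
  rw [hammingDist_eq_hammingNorm]
  refine three_le_hammingNorm ha hφ (add_mem (neg_mem hx.1) hy.1) ?_ ?_
  · rw [map_add, map_neg, hx.2, hy.2, neg_add_cancel]
  · rwa [Ne, neg_add_eq_zero]

end Ring

lemma syndromeFiber_nonempty [DivisionRing F] {a : ι → F} {φ : G →+ F} (ha : Surjective a)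
    (hφ : φ ≠ 0) (f : F) :
    (syndromeFiber a φ f).Nonempty := by
  classical
  obtain ⟨g, hg⟩ : ∃ g, φ g ≠ 0 := DFunLike.ne_iff.1 hφ
  obtain ⟨p, hp⟩ := ha (f * (φ g)⁻¹)
  obtain ⟨q, hq⟩ := ha 0
  refine ⟨Pi.single p g - Pi.single q g, ?_, ?_⟩
  · simp [mem_zeroSumCode]
  · simp [syndrome_apply, Pi.single_apply, apply_ite φ, mul_sub, sum_sub_distrib, hp, hq,
      inv_mul_cancel_right₀ hg]

end Syndrome

theorem stmt_12 (k : ℕ) (hk : 2 ≤ k) :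
    ∃ C : Set (Fin (2 ^ k) → ZMod 4),
      (∀ x ∈ C, ∀ y ∈ C, ¬ (hammingGraph (2 ^ k)).Adj x y) ∧
      C.ncard = 4 ^ (2 ^ k - 1) ∧
      ∃ L : Fin (2 ^ k) → Set (Fin (2 ^ k) → ZMod 4),
        (∀ i, (L i).Nonempty) ∧
        (∀ i j, i ≠ j → Disjoint (L i) (L j)) ∧
        (⋃ i, L i) = C ∧
        (∀ i, ∀ x ∈ L i, ∀ y ∈ L i, x ≠ y →
          3 ≤ (hammingGraph (2 ^ k)).dist x y) := by
  let F := GaloisField 2 k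
  let a : Fin (2 ^ k) ≃ F := (Finite.equivFinOfCardEq (GaloisField.card 2 k (by omega))).symm
  obtain ⟨v, hv⟩ := exists_linearIndependent_of_le_finrank (R := ZMod 2) (M := F) (n := 2)
    (by rwa [GaloisField.finrank 2 (by omega)])
  let φ := (Fintype.linearCombination (ZMod 2) v).toAddMonoidHom
  have hφ : Injective φ := hv.fintypeLinearCombination_injective
  have hφ0 : φ ≠ 0 := DFunLike.ne_iff.2 ⟨Pi.single 0 1, by simpa [φ] using hv.ne_zero 0⟩
  -- any bijection will do: Hamming distances only see equality of letters
  let e : ZMod 4 ≃ (Fin 2 → ZMod 2) := Fintype.equivOfCardEq (by simp)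
  let E := Equiv.piCongrRight fun _ : Fin (2 ^ k) => e
  have hE (x y) : hammingDist (E x) (E y) = hammingDist x y :=
    hammingDist_comp _ fun _ => e.injective
  refine ⟨E ⁻¹' zeroSumCode (Fin (2 ^ k)) (Fin 2 → ZMod 2), ?_, ?_,
    fun i => E ⁻¹' syndromeFiber a φ (a i), ?_, ?_, ?_, ?_⟩
  · intro x hx y hy hadj
    rw [hammingGraph_adj_iff, ← hE] at hadj
    exact hammingDist_ne_one_of_mem_zeroSumCode hx hy hadj
  · rw [Set.ncard_preimage_of_injective_subset_range E.injective (by simp), ← Nat.card_coe_set_eq,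
      SetLike.coe_sort_coe, card_zeroSumCode]
    simp
  · exact fun i => (syndromeFiber_nonempty a.surjective hφ0 _).preimage E.surjective
  · exact fun i j hij => (disjoint_syndromeFiber a φ (a.injective.ne hij)).preimage E
  · rw [← Set.preimage_iUnion, iUnion_syndromeFiber a φ a.surjective]
  · intro i x hx y hy hxy
    rw [hammingGraph_dist, ← hE]
    exact three_le_hammingDist_of_mem_syndromeFiber a.injective hφ hx hy (E.injective.ne hxy)
end
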